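/- arXiv:2405.12973 — 8 statements merged into one kernel-verified Lean document; each statement's English description precedes it below -/
import Mathlib

section
/- Let K ⊆ ℝ^n be a proper convex cone and let q(x) = xᵀQx be a quadratic form whose real symmetric matrix Q has exactly one positive eigenvalue (counted with multiplicity). Then q is K-Lorentzian if and only if Qx ∈ K* for every x ∈ K, i.e. Q(K) ⊆ K*. -/
open Matrix

/-- The number of positive eigenvalues (with multiplicity) of a real symmetric matrix. -/
noncomputable def posEigCount {n : ℕ} (Q : Matrix (Fin n) (Fin n) ℝ) : ℕ :=
  @dite _ Q.IsHermitian (Classical.dec _)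
    (fun h => (Finset.univ.filter fun i => 0 < h.eigenvalues i).card)
    (fun _ => 0)

/-- A proper convex cone: a closed convex cone that is pointed and solid. -/
def IsProperCone {n : ℕ} (K : Set (Fin n → ℝ)) : Prop :=
  Convex ℝ K ∧ (∀ c : ℝ, 0 ≤ c → ∀ x ∈ K, c • x ∈ K) ∧
    IsClosed K ∧ K ∩ (-K) = {0} ∧ (interior K).Nonempty

/-- The dual cone of `K` with respect to the standard inner product. -/
def dualConeSet {n : ℕ} (K : Set (Fin n → ℝ)) : Set (Fin n → ℝ) :=
  {y | ∀ x ∈ K, 0 ≤ y ⬝ᵥ x}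

/-- The quadratic form with symmetric matrix `Q` is `K`-Lorentzian: `Q` has exactly one
positive eigenvalue and `yᵀQx > 0` for all `x, y` in the interior of `K`. -/
def IsLorentzianMatrix {n : ℕ} (K : Set (Fin n → ℝ)) (Q : Matrix (Fin n) (Fin n) ℝ) : Prop :=
  posEigCount Q = 1 ∧ ∀ x ∈ interior K, ∀ y ∈ interior K, 0 < y ⬝ᵥ (Q *ᵥ x)

/-- A nonzero `v ∈ K` spans an extreme ray of `K`. -/
def SpansExtremeRay {n : ℕ} (K : Set (Fin n → ℝ)) (v : Fin n → ℝ) : Prop :=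
  v ∈ K ∧ v ≠ 0 ∧ ∀ x ∈ K, ∀ y ∈ K, v = x + y →
    (∃ c : ℝ, 0 ≤ c ∧ x = c • v) ∧ (∃ c : ℝ, 0 ≤ c ∧ y = c • v)

/-! If `yᵀQx = 0` for interior points `x, y` of `K`, then `Qx ∈ K*` vanishes at an interior
point, which forces `Qx = 0`. Then `Q` maps a whole neighbourhood of `x` into the cone `K*`, hence
maps everything into `K* ∩ -K* = {0}`; but `Q ≠ 0` as it has a positive eigenvalue. Conversely,
`yᵀQx ≥ 0` extends from the interior to all of `K` because a convex set with nonempty interior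
lies in the closure of its interior. -/

open Filter Topology

theorem exists_pos_add_smul_mem_of_mem_interior {E : Type*} [AddCommGroup E] [Module ℝ E]
    [TopologicalSpace E] [ContinuousAdd E] [ContinuousSMul ℝ E] {s : Set E} {x : E}
    (hx : x ∈ interior s) (v : E) : ∃ t : ℝ, 0 < t ∧ x + t • v ∈ s := by
  have hlim : Tendsto (fun t : ℝ => x + t • v) (𝓝[>] 0) (𝓝 x) :=
    tendsto_nhdsWithin_of_tendsto_nhds (Continuous.tendsto' (by fun_prop) 0 x (by simp))
  obtain ⟨t, hts, ht⟩ :=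
    ((hlim.eventually (mem_interior_iff_mem_nhds.mp hx)).and self_mem_nhdsWithin).exists
  exact ⟨t, ht, hts⟩

theorem Convex.nonneg_of_nonneg_on_interior {E : Type*} [AddCommGroup E] [Module ℝ E]
    [TopologicalSpace E] [IsTopologicalAddGroup E] [ContinuousSMul ℝ E] {K : Set E}
    (hK : Convex ℝ K) (hint : (interior K).Nonempty) {f : E → ℝ} (hf : Continuous f)
    (h : ∀ x ∈ interior K, 0 ≤ f x) : ∀ x ∈ K, 0 ≤ f x := by
  have : closure (interior K) ⊆ {x | 0 ≤ f x} :=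
    (isClosed_le continuous_const hf).closure_subset_iff.mpr h
  rw [hK.closure_interior_eq_closure_of_nonempty_interior hint] at this
  exact fun x hx => this (subset_closure hx)

section DualCone

variable {n : ℕ} {K : Set (Fin n → ℝ)}

theorem eq_zero_of_mem_dualConeSet_of_dotProduct_eq_zero {w y : Fin n → ℝ}
    (hw : w ∈ dualConeSet K) (hy : y ∈ interior K) (hwy : w ⬝ᵥ y = 0) : w = 0 := by
  obtain ⟨t, ht, hmem⟩ := exists_pos_add_smul_mem_of_mem_interior hy (-w)
  have : 0 ≤ -t * (w ⬝ᵥ w) := by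
    simpa [dotProduct_add, hwy] using hw _ hmem
  exact dotProduct_self_eq_zero.mp <| le_antisymm (nonpos_of_mul_nonneg_right this (by linarith))
    (by simpa using dotProduct_self_star_nonneg w)

theorem eq_zero_of_mem_dualConeSet_of_neg_mem (hint : (interior K).Nonempty)
    {w : Fin n → ℝ} (hw : w ∈ dualConeSet K) (hw' : -w ∈ dualConeSet K) : w = 0 := by
  obtain ⟨y, hy⟩ := hint
  refine eq_zero_of_mem_dualConeSet_of_dotProduct_eq_zero hw hy (le_antisymm ?_ ?_)
  · simpa using hw' y (interior_subset hy)
  · exact hw y (interior_subset hy)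

theorem eq_zero_of_mapsTo_dualConeSet_of_mulVec_eq_zero {Q : Matrix (Fin n) (Fin n) ℝ}
    (hQ : ∀ x ∈ K, Q *ᵥ x ∈ dualConeSet K) {x : Fin n → ℝ} (hx : x ∈ interior K)
    (hQx : Q *ᵥ x = 0) : Q = 0 := by
  have hrange : ∀ v, Q *ᵥ v ∈ dualConeSet K := by
    intro v z hz
    obtain ⟨t, ht, hmem⟩ := exists_pos_add_smul_mem_of_mem_interior hx v
    have : 0 ≤ t * (Q *ᵥ v ⬝ᵥ z) := by
      simpa [mulVec_add, mulVec_smul, hQx] using hQ _ hmem z hz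
    exact nonneg_of_mul_nonneg_right this ht
  refine ext_iff_mulVec.mpr fun v => ?_
  rw [zero_mulVec]
  exact eq_zero_of_mem_dualConeSet_of_neg_mem ⟨x, hx⟩ (hrange v)
    (by simpa [mulVec_neg] using hrange (-v))

end DualCone

theorem posEigCount_zero {n : ℕ} : posEigCount (0 : Matrix (Fin n) (Fin n) ℝ) = 0 := by
  rw [posEigCount, dif_pos isHermitian_zero, Finset.card_eq_zero, Finset.filter_eq_empty_iff]
  simp [isHermitian_zero.eigenvalues_eq_zero_iff.mpr rfl]

theorem stmt0_general {n : ℕ} (K : Set (Fin n → ℝ)) (hK : IsProperCone K)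
    (Q : Matrix (Fin n) (Fin n) ℝ) (heig : posEigCount Q = 1) :
    IsLorentzianMatrix K Q ↔ ∀ x ∈ K, Q *ᵥ x ∈ dualConeSet K := by
  obtain ⟨hconv, -, -, -, hint⟩ := hK
  constructor
  · rintro ⟨-, hpos⟩ x hx
    have hQx_nonneg : ∀ y ∈ interior K, 0 ≤ Q *ᵥ x ⬝ᵥ y := fun y hy => by
      rw [dotProduct_comm]
      exact hconv.nonneg_of_nonneg_on_interior hint (by fun_prop)
        (fun x' hx' => (hpos x' hx' y hy).le) x hx
    exact hconv.nonneg_of_nonneg_on_interior hint (by fun_prop) hQx_nonneg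
  · refine fun hQ => ⟨heig, fun x hx y hy => ?_⟩
    rw [dotProduct_comm]
    refine (hQ x (interior_subset hx) y (interior_subset hy)).lt_of_ne fun hxy => ?_
    have hQ0 : Q = 0 := eq_zero_of_mapsTo_dualConeSet_of_mulVec_eq_zero hQ hx
      (eq_zero_of_mem_dualConeSet_of_dotProduct_eq_zero (hQ x (interior_subset hx)) hy hxy.symm)
    simp [hQ0, posEigCount_zero] at heig

/-- Let `K ⊆ ℝⁿ` be a proper convex cone and `q(x) = xᵀQx` a quadratic form
whose real symmetric matrix `Q` has exactly one positive eigenvalue. Then `q` is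
`K`-Lorentzian if and only if `Q(K) ⊆ K*`. -/
theorem stmt0 {n : ℕ} (K : Set (Fin n → ℝ)) (hK : IsProperCone K)
    (Q : Matrix (Fin n) (Fin n) ℝ) (hsymm : Q.IsHermitian) (heig : posEigCount Q = 1) :
    IsLorentzianMatrix K Q ↔ ∀ x ∈ K, Q *ᵥ x ∈ dualConeSet K :=
  stmt0_general K hK Q heig
end

section
/- Let K ⊆ ℝ^n be a proper convex cone and let q(x) = xᵀQx be a quadratic form whose real symmetric matrix Q has exactly one positive eigenvalue (counted with multiplicity). Then q is K-Lorentzian if and only if yᵀQx ≥ 0 for all vectors x and y spanning extreme rays of K. -/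
open Matrix

/-
`K` is the closure of its interior, so positivity of `yᵀQx` on `int K × int K` gives
`yᵀQx ≥ 0` on `K × K`, in particular on extreme rays.

Conversely, separating each unit vector of `K` from `-K` and using compactness of the unit
sphere gives a functional `f` with `f x ≥ m ‖x‖` on `K`, so `K ∩ {f = 1}` is a compact convex
base of `K` whose extreme points span extreme rays. Krein–Milman, applied in each argument,
spreads `yᵀQx ≥ 0` from the extreme points to the base, and homogeneity to `K × K`.
If then `yᵀQx = 0` for interior `x, y`, the vector `Qx` lies in the dual cone and vanishes at
an interior point, so `Qx = 0`; but then `(x - tu)ᵀQ(x + tu) = -t² uᵀQu < 0` for small `t ≠ 0`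
and a vector `u` with `uᵀQu > 0`, which exists since `Q` has a positive eigenvalue.
-/

open Filter Topology

lemma eventually_add_smul_mem_of_mem_interior {E : Type*} [AddCommGroup E] [Module ℝ E]
    [TopologicalSpace E] [ContinuousAdd E] [ContinuousSMul ℝ E] {K : Set E} {x : E}
    (hx : x ∈ interior K) (v : E) : ∀ᶠ t in 𝓝 (0 : ℝ), x + t • v ∈ K :=
  (by fun_prop : Continuous fun t : ℝ => x + t • v).continuousAt.preimage_mem_nhds
    (by simpa using mem_interior_iff_mem_nhds.mp hx)

lemma eq_zero_of_mem_dualConeSet {n : ℕ} {K : Set (Fin n → ℝ)} {w x : Fin n → ℝ}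
    (hw : w ∈ dualConeSet K) (hx : x ∈ interior K) (hwx : w ⬝ᵥ x = 0) : w = 0 := by
  obtain ⟨t, hxt, ht⟩ := ((eventually_add_smul_mem_of_mem_interior hx w).filter_mono
    nhdsWithin_le_nhds |>.and (self_mem_nhdsWithin (s := Set.Iio 0))).exists
  have := hw _ hxt
  rw [dotProduct_add, dotProduct_smul, hwx, zero_add, smul_eq_mul] at this
  exact dotProduct_self_eq_zero.mp
    (le_antisymm (nonpos_of_mul_nonneg_right this ht) (dotProduct_self_star_nonneg w))

lemma exists_dotProduct_mulVec_self_pos {n : ℕ} {Q : Matrix (Fin n) (Fin n) ℝ}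
    (hsymm : Q.IsHermitian) (hpos : 0 < posEigCount Q) : ∃ u, 0 < u ⬝ᵥ (Q *ᵥ u) := by
  rw [posEigCount, dif_pos hsymm, Finset.card_pos] at hpos
  obtain ⟨i, hi⟩ := hpos
  refine ⟨hsymm.eigenvectorBasis i, ?_⟩
  simpa [hsymm.eigenvalues_eq i] using (Finset.mem_filter.mp hi).2

lemma dotProduct_mulVec_pos_on_interior_of_nonneg {n : ℕ} {K : Set (Fin n → ℝ)}
    {Q : Matrix (Fin n) (Fin n) ℝ} (hsymm : Q.IsHermitian) (hu : ∃ u, 0 < u ⬝ᵥ (Q *ᵥ u))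
    (hnonneg : ∀ x ∈ K, ∀ y ∈ K, 0 ≤ y ⬝ᵥ (Q *ᵥ x)) {x y : Fin n → ℝ}
    (hx : x ∈ interior K) (hy : y ∈ interior K) : 0 < y ⬝ᵥ (Q *ᵥ x) := by
  refine (hnonneg x (interior_subset hx) y (interior_subset hy)).lt_of_ne' fun hyx => ?_
  have hQx : Q *ᵥ x = 0 := by
    refine eq_zero_of_mem_dualConeSet (fun v hv => ?_) hy (by rwa [dotProduct_comm])
    rw [dotProduct_comm]
    exact hnonneg x (interior_subset hx) v hv
  have hxQ : x ᵥ* Q = 0 := by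
    rw [← mulVec_transpose, ← conjTranspose_eq_transpose_of_trivial, hsymm.eq, hQx]
  obtain ⟨u, hu⟩ := hu
  obtain ⟨t, ⟨hplus, hminus⟩, ht⟩ := ((eventually_add_smul_mem_of_mem_interior hx u).and
    (eventually_add_smul_mem_of_mem_interior hx (-u)) |>.filter_mono nhdsWithin_le_nhds |>.and
    (self_mem_nhdsWithin (s := {0}ᶜ))).exists
  have h := hnonneg _ hplus _ hminus
  simp only [mulVec_add, mulVec_smul, hQx, zero_add, dotProduct_smul, add_dotProduct,
    smul_dotProduct, dotProduct_mulVec x, hxQ, zero_dotProduct, neg_dotProduct, smul_eq_mul] at h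
  nlinarith [mul_pos (pow_pos (abs_pos.mpr ht) 2) hu, sq_abs t]

lemma dotProduct_mulVec_nonneg_of_pos_on_interior {n : ℕ} {K : Set (Fin n → ℝ)}
    (hconv : Convex ℝ K) (hclosed : IsClosed K) (hint : (interior K).Nonempty)
    {Q : Matrix (Fin n) (Fin n) ℝ}
    (hpos : ∀ x ∈ interior K, ∀ y ∈ interior K, 0 < y ⬝ᵥ (Q *ᵥ x)) :
    ∀ x ∈ K, ∀ y ∈ K, 0 ≤ y ⬝ᵥ (Q *ᵥ x) := by
  have hcl : closure (interior K) = K := by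
    rw [hconv.closure_interior_eq_closure_of_nonempty_interior hint, hclosed.closure_eq]
  have hsub : K ×ˢ K ⊆ {p | 0 ≤ p.2 ⬝ᵥ (Q *ᵥ p.1)} := by
    rw [← hcl, ← closure_prod_eq]
    exact closure_minimal (fun p hp => (hpos _ hp.1 _ hp.2).le)
      (isClosed_le continuous_const (by fun_prop))
  exact fun x hx y hy => hsub (Set.mk_mem_prod hx hy)

lemma subset_of_extremePoints_subset {E : Type*} [AddCommGroup E] [Module ℝ E]
    [TopologicalSpace E] [T2Space E] [IsTopologicalAddGroup E] [ContinuousSMul ℝ E]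
    [LocallyConvexSpace ℝ E] {C T : Set E} (hC : IsCompact C) (hCconv : Convex ℝ C)
    (hT : IsClosed T) (hTconv : Convex ℝ T) (hCT : C.extremePoints ℝ ⊆ T) : C ⊆ T := by
  rw [← closure_convexHull_extremePoints hC hCconv]
  exact closure_minimal (convexHull_min hCT hTconv) hT

lemma dotProduct_mulVec_nonneg_of_extremePoints {n : ℕ} {C : Set (Fin n → ℝ)}
    (hC : IsCompact C) (hCconv : Convex ℝ C) {Q : Matrix (Fin n) (Fin n) ℝ}
    (hext : ∀ x ∈ C.extremePoints ℝ, ∀ y ∈ C.extremePoints ℝ, 0 ≤ y ⬝ᵥ (Q *ᵥ x)) :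
    ∀ x ∈ C, ∀ y ∈ C, 0 ≤ y ⬝ᵥ (Q *ᵥ x) := by
  have hright : ∀ y ∈ C.extremePoints ℝ, C ⊆ {x | 0 ≤ y ⬝ᵥ (Q *ᵥ x)} := fun y hy =>
    subset_of_extremePoints_subset hC hCconv (isClosed_le continuous_const (by fun_prop))
      (convex_halfSpace_ge ⟨fun a b => by simp [mulVec_add], fun c a => by simp [mulVec_smul]⟩ 0)
      fun x hx => hext x hx y hy
  intro x hx
  exact subset_of_extremePoints_subset (T := {y | 0 ≤ y ⬝ᵥ (Q *ᵥ x)}) hC hCconv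
    (isClosed_le continuous_const (by fun_prop))
    (convex_halfSpace_ge ⟨fun a b => by simp [add_dotProduct], fun c a => by simp⟩ 0)
    fun y hy => hright y hy hx

lemma exists_nonneg_on_of_neg_notMem {n : ℕ} {K : Set (Fin n → ℝ)} (hconv : Convex ℝ K)
    (hsmul : ∀ c : ℝ, 0 ≤ c → ∀ x ∈ K, c • x ∈ K) (hclosed : IsClosed K) {s : Fin n → ℝ}
    (hsK : s ∈ K) (hs : -s ∉ K) :
    ∃ g : StrongDual ℝ (Fin n → ℝ), (∀ x ∈ K, 0 ≤ g x) ∧ 0 < g s := by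
  obtain ⟨f, u, hfK, hfs⟩ := geometric_hahn_banach_closed_point hconv hclosed hs
  have hu : 0 < u := by simpa using hfK 0 (by simpa using hsmul 0 le_rfl s hsK)
  refine ⟨-f, fun x hx => ?_, by simpa using hu.trans hfs⟩
  by_contra! hfx
  replace hfx : 0 < f x := by simpa using hfx
  have := hfK _ (hsmul (u / f x) (by positivity) x hx)
  rw [map_smul, smul_eq_mul, div_mul_cancel₀ _ hfx.ne'] at this
  exact this.false

lemma exists_strongDual_mul_norm_le {n : ℕ} {K : Set (Fin n → ℝ)} (hconv : Convex ℝ K)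
    (hsmul : ∀ c : ℝ, 0 ≤ c → ∀ x ∈ K, c • x ∈ K) (hclosed : IsClosed K)
    (hpointed : K ∩ (-K) = {0}) :
    ∃ f : StrongDual ℝ (Fin n → ℝ), ∃ m > 0, ∀ x ∈ K, m * ‖x‖ ≤ f x := by
  set S := K ∩ Metric.sphere 0 1
  have hS : IsCompact S := (isCompact_sphere 0 1).inter_left hclosed
  have hsep : ∀ s : S, ∃ g : StrongDual ℝ (Fin n → ℝ), (∀ x ∈ K, 0 ≤ g x) ∧ 0 < g s := by
    rintro ⟨s, hsK, hs1⟩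
    refine exists_nonneg_on_of_neg_notMem hconv hsmul hclosed hsK fun hs => ?_
    have : s ∈ K ∩ (-K) := ⟨hsK, hs⟩
    simp [hpointed] at this
    simp [this] at hs1
  choose g hgK hgs using hsep
  obtain ⟨t, ht⟩ := hS.elim_finite_subcover (fun s => {x | 0 < g s x})
    (fun s => isOpen_lt continuous_const (g s).continuous)
    fun s hs => Set.mem_iUnion.mpr ⟨⟨s, hs⟩, hgs _⟩
  set f := ∑ s ∈ t, g s
  have hfK : ∀ x ∈ K, 0 ≤ f x := fun x hx => by
    simpa [f] using Finset.sum_nonneg fun s _ => hgK s x hx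
  have hfS : ∀ x ∈ S, 0 < f x := fun x hx => by
    obtain ⟨s, hst, hsx⟩ := Set.mem_iUnion₂.mp (ht hx)
    simpa [f] using Finset.sum_pos' (fun s _ => hgK s x hx.1) ⟨s, hst, hsx⟩
  obtain ⟨m, hm, hmS⟩ := hS.exists_forall_le' f.continuous.continuousOn hfS
  refine ⟨f, m, hm, fun x hx => ?_⟩
  rcases eq_or_ne x 0 with rfl | hx0
  · simp
  have hnx : 0 < ‖x‖ := norm_pos_iff.mpr hx0
  have := hmS (‖x‖⁻¹ • x) ⟨hsmul _ (by positivity) x hx, by simp [norm_smul, hnx.ne']⟩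
  rw [map_smul, smul_eq_mul] at this
  rwa [le_inv_mul_iff₀ hnx, mul_comm] at this

def coneBase {n : ℕ} (K : Set (Fin n → ℝ)) (f : StrongDual ℝ (Fin n → ℝ)) : Set (Fin n → ℝ) :=
  K ∩ f ⁻¹' {1}

section coneBase

variable {n : ℕ} {K : Set (Fin n → ℝ)} {f : StrongDual ℝ (Fin n → ℝ)}

lemma inv_smul_mem_coneBase (hsmul : ∀ c : ℝ, 0 ≤ c → ∀ x ∈ K, c • x ∈ K) {x : Fin n → ℝ}
    (hx : x ∈ K) (hfx : 0 < f x) : (f x)⁻¹ • x ∈ coneBase K f :=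
  ⟨hsmul _ (inv_nonneg.mpr hfx.le) x hx, by simp [hfx.ne']⟩

lemma convex_coneBase (hconv : Convex ℝ K) : Convex ℝ (coneBase K f) :=
  hconv.inter (convex_hyperplane f.isLinear 1)

lemma isCompact_coneBase (hclosed : IsClosed K) {m : ℝ} (hm : 0 < m)
    (hf : ∀ x ∈ K, m * ‖x‖ ≤ f x) : IsCompact (coneBase K f) := by
  refine (isCompact_closedBall 0 m⁻¹).of_isClosed_subset
    (hclosed.inter (isClosed_singleton.preimage f.continuous)) fun x ⟨hxK, hfx⟩ => ?_
  have := hf x hxK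
  rw [Set.mem_preimage, Set.mem_singleton_iff] at hfx
  rw [mem_closedBall_zero_iff, ← mul_one m⁻¹, le_inv_mul_iff₀ hm]
  linarith

lemma exists_eq_smul_of_mem_extremePoints_coneBase
    (hsmul : ∀ c : ℝ, 0 ≤ c → ∀ x ∈ K, c • x ∈ K) (hf : ∀ x ∈ K, x ≠ 0 → 0 < f x)
    {v x y : Fin n → ℝ} (hv : v ∈ (coneBase K f).extremePoints ℝ) (hx : x ∈ K) (hy : y ∈ K)
    (hxy : v = x + y) : ∃ c : ℝ, 0 ≤ c ∧ x = c • v := by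
  rcases eq_or_ne x 0 with rfl | hx0
  · exact ⟨0, le_rfl, by simp⟩
  rcases eq_or_ne y 0 with rfl | hy0
  · exact ⟨1, zero_le_one, by simp [hxy]⟩
  have hfx := hf x hx hx0
  have hfy := hf y hy hy0
  have hsum : f x + f y = 1 := by rw [← map_add, ← hxy]; exact hv.1.2
  have hseg : v ∈ openSegment ℝ ((f x)⁻¹ • x) ((f y)⁻¹ • y) :=
    ⟨f x, f y, hfx, hfy, hsum, by simp [smul_inv_smul₀ hfx.ne', smul_inv_smul₀ hfy.ne', hxy]⟩
  have hxv := hv.2 (inv_smul_mem_coneBase hsmul hx hfx) (inv_smul_mem_coneBase hsmul hy hfy) hseg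
  exact ⟨f x, hfx.le, by rw [← hxv, smul_inv_smul₀ hfx.ne']⟩

lemma spansExtremeRay_of_mem_extremePoints_coneBase
    (hsmul : ∀ c : ℝ, 0 ≤ c → ∀ x ∈ K, c • x ∈ K) (hf : ∀ x ∈ K, x ≠ 0 → 0 < f x)
    {v : Fin n → ℝ} (hv : v ∈ (coneBase K f).extremePoints ℝ) : SpansExtremeRay K v := by
  refine ⟨hv.1.1, fun hv0 => by simpa [hv0] using hv.1.2, fun x hx y hy hxy =>
    ⟨exists_eq_smul_of_mem_extremePoints_coneBase hsmul hf hv hx hy hxy,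
      exists_eq_smul_of_mem_extremePoints_coneBase hsmul hf hv hy hx (hxy.trans (add_comm x y))⟩⟩

end coneBase

lemma dotProduct_mulVec_nonneg_of_spansExtremeRay {n : ℕ} {K : Set (Fin n → ℝ)}
    (hconv : Convex ℝ K) (hsmul : ∀ c : ℝ, 0 ≤ c → ∀ x ∈ K, c • x ∈ K) (hclosed : IsClosed K)
    (hpointed : K ∩ (-K) = {0}) {Q : Matrix (Fin n) (Fin n) ℝ}
    (hext : ∀ x y, SpansExtremeRay K x → SpansExtremeRay K y → 0 ≤ y ⬝ᵥ (Q *ᵥ x)) :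
    ∀ x ∈ K, ∀ y ∈ K, 0 ≤ y ⬝ᵥ (Q *ᵥ x) := by
  obtain ⟨f, m, hm, hfm⟩ := exists_strongDual_mul_norm_le hconv hsmul hclosed hpointed
  have hf : ∀ x ∈ K, x ≠ 0 → 0 < f x := fun x hx hx0 =>
    (mul_pos hm (norm_pos_iff.mpr hx0)).trans_le (hfm x hx)
  have hbase := dotProduct_mulVec_nonneg_of_extremePoints (isCompact_coneBase hclosed hm hfm)
    (convex_coneBase hconv) fun x hx y hy => hext x y
      (spansExtremeRay_of_mem_extremePoints_coneBase hsmul hf hx)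
      (spansExtremeRay_of_mem_extremePoints_coneBase hsmul hf hy)
  intro x hx y hy
  rcases eq_or_ne x 0 with rfl | hx0
  · simp
  rcases eq_or_ne y 0 with rfl | hy0
  · simp
  have hfx := hf x hx hx0
  have hfy := hf y hy hy0
  have := hbase _ (inv_smul_mem_coneBase hsmul hx hfx) _ (inv_smul_mem_coneBase hsmul hy hfy)
  rw [mulVec_smul, dotProduct_smul, smul_dotProduct, smul_eq_mul, smul_eq_mul] at this
  exact nonneg_of_mul_nonneg_right (nonneg_of_mul_nonneg_right this (by positivity))
    (by positivity)

/-- Let `K ⊆ ℝⁿ` be a proper convex cone and `q(x) = xᵀQx` a quadratic form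
whose real symmetric matrix `Q` has exactly one positive eigenvalue. Then `q` is
`K`-Lorentzian if and only if `yᵀQx ≥ 0` for all `x, y` spanning extreme rays of `K`. -/
theorem stmt1 {n : ℕ} (K : Set (Fin n → ℝ)) (hK : IsProperCone K)
    (Q : Matrix (Fin n) (Fin n) ℝ) (hsymm : Q.IsHermitian) (heig : posEigCount Q = 1) :
    IsLorentzianMatrix K Q ↔
      ∀ x y : Fin n → ℝ, SpansExtremeRay K x → SpansExtremeRay K y → 0 ≤ y ⬝ᵥ (Q *ᵥ x) := by
  obtain ⟨hconv, hsmul, hclosed, hpointed, hint⟩ := hK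
  constructor
  · rintro ⟨-, hpos⟩ x y hx hy
    exact dotProduct_mulVec_nonneg_of_pos_on_interior hconv hclosed hint hpos x hx.1 y hy.1
  · intro hext
    have hnonneg := dotProduct_mulVec_nonneg_of_spansExtremeRay hconv hsmul hclosed hpointed hext
    have hu := exists_dotProduct_mulVec_self_pos hsymm (heig ▸ Nat.one_pos)
    exact ⟨heig, fun x hx y hy =>
      dotProduct_mulVec_pos_on_interior_of_nonneg hsymm hu hnonneg hx hy⟩
end

section
/- Let K ⊆ ℝ^n be a proper convex cone and let q(x) = xᵀQx be a quadratic form whose real symmetric matrix Q has exactly one positive eigenvalue (counted with multiplicity). Then q is K-Lorentzian if and only if xᵀQx > 0 for every x in the interior of K. -/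
open Matrix

/-!
If `Q` has a single positive eigenvalue, then `q(v) = vᵀQv` is nonpositive on the hyperplane
orthogonal to the corresponding eigenvector. Two vectors `x, y` with `q(x), q(y) > 0` can therefore
not be `Q`-orthogonal: otherwise the combination of `x` and `y` lying in that hyperplane would have
positive `q`. So `(x, y) ↦ yᵀQx` has no zero on `int K × int K`, which is connected because `K` is
convex; being positive on the diagonal, it is positive everywhere.
-/

theorem IsPreconnected.pos_of_forall_ne_zero {X α : Type*} [TopologicalSpace X] [LinearOrder α]
    [TopologicalSpace α] [OrderClosedTopology α] [Zero α] {s : Set X} (hs : IsPreconnected s)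
    {f : X → α} (hf : ContinuousOn f s) (hne : ∀ p ∈ s, f p ≠ 0) {a b : X} (ha : a ∈ s)
    (hfa : 0 < f a) (hb : b ∈ s) : 0 < f b := by
  by_contra! hfb
  obtain ⟨p, hp, hfp⟩ := hs.intermediate_value₂ hb ha hf continuousOn_const hfb hfa.le
  exact hne p hp hfp

namespace LinearMap.BilinForm

variable {𝕜 E : Type*} [Field 𝕜] [LinearOrder 𝕜] [IsStrictOrderedRing 𝕜] [AddCommGroup E]
  [Module 𝕜 E]

theorem apply_ne_zero_of_nonpos_on_ker {B : LinearMap.BilinForm 𝕜 E} (hB : B.IsSymm)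
    (φ : E →ₗ[𝕜] 𝕜) (hφ : ∀ v, φ v = 0 → B v v ≤ 0) {x y : E} (hx : 0 < B x x)
    (hy : 0 < B y y) : B x y ≠ 0 := by
  intro hxy
  have hyx : B y x = 0 := hB.eq y x ▸ hxy
  set v := φ y • x - φ x • y
  have hv : B v v = φ y ^ 2 * B x x + φ x ^ 2 * B y y := by
    simp only [v, map_sub, map_smul, LinearMap.sub_apply, LinearMap.smul_apply, smul_eq_mul,
      hxy, hyx]
    ring
  have hφx : φ x = 0 := by
    have hkey : φ x ^ 2 * B y y ≤ 0 := by
      have hvker := hφ v (by simp only [v, map_sub, map_smul, smul_eq_mul]; ring)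
      linarith [mul_nonneg (sq_nonneg (φ y)) hx.le]
    exact pow_eq_zero_iff two_ne_zero |>.1
      (le_antisymm (nonpos_of_mul_nonpos_left hkey hy) (sq_nonneg _))
  exact (hφ x hφx).not_gt hx

end LinearMap.BilinForm

namespace Matrix

theorem IsHermitian.dotProduct_mulVec_self_eq_sum {ι : Type*} [Fintype ι] [DecidableEq ι]
    {A : Matrix ι ι ℝ} (hA : A.IsHermitian) (v : ι → ℝ) :
    v ⬝ᵥ A *ᵥ v =
      ∑ i, hA.eigenvalues i * ((star (hA.eigenvectorUnitary : Matrix ι ι ℝ) *ᵥ v) i) ^ 2 := by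
  conv_lhs => rw [hA.spectral_theorem, Unitary.conjStarAlgAut_apply]
  rw [← mulVec_mulVec, ← mulVec_mulVec, dotProduct_mulVec, ← mulVec_transpose,
    ← conjTranspose_eq_transpose_of_trivial, ← star_eq_conjTranspose]
  simp only [dotProduct, mulVec_diagonal, Function.comp_apply, RCLike.ofReal_real_eq_id, id_eq]
  exact Finset.sum_congr rfl fun i _ => by ring

theorem IsHermitian.exists_linearMap_nonpos_on_ker {n : ℕ} {A : Matrix (Fin n) (Fin n) ℝ}
    (hA : A.IsHermitian) (hpos : posEigCount A ≤ 1) :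
    ∃ φ : (Fin n → ℝ) →ₗ[ℝ] ℝ, ∀ v, φ v = 0 → v ⬝ᵥ A *ᵥ v ≤ 0 := by
  set s := Finset.univ.filter fun i => 0 < hA.eigenvalues i
  have hs : s.card ≤ 1 := by rwa [posEigCount, dif_pos hA] at hpos
  -- `φ` is the coordinate along the eigenvector of the positive eigenvalue, if there is one.
  refine ⟨∑ i ∈ s,
    (LinearMap.proj i).comp (mulVecLin (star (hA.eigenvectorUnitary : Matrix _ _ ℝ))),
    fun v hv => ?_⟩
  rw [hA.dotProduct_mulVec_self_eq_sum v]
  refine Finset.sum_nonpos fun j _ => ?_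
  by_cases hj : j ∈ s
  · have hvj : (star (hA.eigenvectorUnitary : Matrix _ _ ℝ) *ᵥ v) j = 0 := by
      rw [← hv, LinearMap.sum_apply, Finset.sum_eq_single_of_mem j hj
        fun i hi hij => (hij (Finset.card_le_one.1 hs i hi j hj)).elim]
      rfl
    simp [hvj]
  · exact mul_nonpos_of_nonpos_of_nonneg (by simpa [s] using hj) (sq_nonneg _)

theorem IsHermitian.dotProduct_mulVec_pos_of_convex {n : ℕ} {Q : Matrix (Fin n) (Fin n) ℝ}
    (hQ : Q.IsHermitian) (hpos : posEigCount Q ≤ 1) {C : Set (Fin n → ℝ)} (hC : Convex ℝ C)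
    (hdiag : ∀ x ∈ C, 0 < x ⬝ᵥ (Q *ᵥ x)) {x y : Fin n → ℝ} (hx : x ∈ C) (hy : y ∈ C) :
    0 < y ⬝ᵥ (Q *ᵥ x) := by
  obtain ⟨φ, hφ⟩ := hQ.exists_linearMap_nonpos_on_ker hpos
  have hB : (toBilin' Q).IsSymm := isSymm_toBilin'_iff_isSymm.2 (isHermitian_iff_isSymm.1 hQ)
  have hf : Continuous fun p : (Fin n → ℝ) × (Fin n → ℝ) => p.2 ⬝ᵥ Q *ᵥ p.1 := by
    simp only [dotProduct, mulVec]
    fun_prop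
  refine (hC.prod hC).isPreconnected.pos_of_forall_ne_zero hf.continuousOn ?_
    (Set.mk_mem_prod hx hx) (hdiag x hx) (Set.mk_mem_prod hx hy)
  rintro ⟨a, b⟩ ⟨ha, hb⟩
  simp only [← toBilin'_apply'] at hφ hdiag ⊢
  exact LinearMap.BilinForm.apply_ne_zero_of_nonpos_on_ker hB φ hφ (hdiag b hb) (hdiag a ha)

end Matrix

/-- Let `K ⊆ ℝⁿ` be a proper convex cone and `q(x) = xᵀQx` a quadratic form
whose real symmetric matrix `Q` has exactly one positive eigenvalue. Then `q` is
`K`-Lorentzian if and only if `xᵀQx > 0` for every `x` in the interior of `K`. -/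
theorem stmt2 {n : ℕ} (K : Set (Fin n → ℝ)) (hK : IsProperCone K)
    (Q : Matrix (Fin n) (Fin n) ℝ) (hsymm : Q.IsHermitian) (heig : posEigCount Q = 1) :
    IsLorentzianMatrix K Q ↔ ∀ x ∈ interior K, 0 < x ⬝ᵥ (Q *ᵥ x) :=
  ⟨fun hL x hx => hL.2 x hx x hx, fun hdiag => ⟨heig, fun _ hx _ hy =>
    hsymm.dotProduct_mulVec_pos_of_convex heig.le hK.1.interior hdiag hx hy⟩⟩
end

section
/- Let q(x) = xᵀQx be a quadratic form on ℝ^n whose real symmetric matrix Q is nonsingular and has exactly one positive eigenvalue (counted with multiplicity). Let K ⊆ ℝ^n be a proper convex cone such that the set of vectors spanning extreme rays of K is path-connected. Then q is K-Lorentzian if and only if q(v) ≥ 0 for every vector v spanning an extreme ray of K. -/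
open Matrix

/-!
Diagonalising `Q` gives a vector `e` with `q(e) > 0` on whose `Q`-orthogonal complement `q` is
negative definite. Hence `B(e, v) = vᵀQe` vanishes at no extreme vector `v` with `q(v) ≥ 0`, and
since the extreme vectors form a connected set we may flip the sign of `e` so that `B(e, v) > 0`
for all of them. The future cone `{x | q(x) ≥ 0, B(e, x) ≥ 0}` is a closed convex cone because
`q ≤ 0` on the `Q`-orthogonal complement of any `x` with `q(x) > 0`; the same fact gives
`B(x, y) > 0` for `x, y` in its interior. By Krein–Milman on a compact base of `K` (cut out by a
functional that is positive on `K ∖ 0`), `K` is contained in the future cone, so `q` is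
`K`-Lorentzian. Conversely `q ≥ 0` on `interior K`, hence on its closure `K`.
-/

open Filter Topology

theorem IsPreconnected.forall_pos_or_forall_neg {X : Type*} [TopologicalSpace X] {S : Set X}
    (hS : IsPreconnected S) {g : X → ℝ} (hg : ContinuousOn g S) (hg0 : ∀ x ∈ S, g x ≠ 0) :
    (∀ x ∈ S, 0 < g x) ∨ ∀ x ∈ S, g x < 0 := by
  by_contra! ⟨⟨a, ha, hga⟩, ⟨b, hb, hgb⟩⟩
  obtain ⟨c, hc, hgc⟩ := hS.intermediate_value ha hb hg ⟨hga, hgb⟩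
  exact hg0 c hc hgc

theorem Convex.subset_of_interior_subset {E : Type*} [AddCommGroup E] [Module ℝ E]
    [TopologicalSpace E] [IsTopologicalAddGroup E] [ContinuousSMul ℝ E] {K T : Set E}
    (hK : Convex ℝ K) (hint : (interior K).Nonempty) (hT : IsClosed T) (h : interior K ⊆ T) :
    K ⊆ T :=
  subset_closure.trans
    (hK.closure_interior_eq_closure_of_nonempty_interior hint ▸ closure_minimal h hT)

theorem OrthonormalBasis.sum_dotProduct_mul_dotProduct {ι κ : Type*} [Fintype ι] [Fintype κ]
    (b : OrthonormalBasis ι ℝ (EuclideanSpace ℝ κ)) (x y : κ → ℝ) :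
    ∑ i, (x ⬝ᵥ b i) * (b i ⬝ᵥ y) = x ⬝ᵥ y := by
  simpa [EuclideanSpace.inner_eq_star_dotProduct, dotProduct_comm] using
    b.sum_inner_mul_inner (WithLp.toLp 2 x) (WithLp.toLp 2 y)

namespace Matrix.IsHermitian

section Fintype

variable {n : Type*} [Fintype n] [DecidableEq n] {A : Matrix n n ℝ}

theorem eigenvectorBasis_dotProduct_mulVec (hA : A.IsHermitian) (i : n) (x : n → ℝ) :
    hA.eigenvectorBasis i ⬝ᵥ A *ᵥ x = hA.eigenvalues i * (hA.eigenvectorBasis i ⬝ᵥ x) := by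
  rw [dotProduct_mulVec, ← mulVec_transpose, (isHermitian_iff_isSymm.1 hA).eq,
    mulVec_eigenvectorBasis, smul_dotProduct, smul_eq_mul]

theorem dotProduct_mulVec_eq_sum (hA : A.IsHermitian) (x y : n → ℝ) :
    x ⬝ᵥ A *ᵥ y =
      ∑ i, hA.eigenvalues i * ((x ⬝ᵥ hA.eigenvectorBasis i) * (hA.eigenvectorBasis i ⬝ᵥ y)) := by
  rw [← hA.eigenvectorBasis.sum_dotProduct_mul_dotProduct x (A *ᵥ y)]
  simp only [eigenvectorBasis_dotProduct_mulVec]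
  exact Finset.sum_congr rfl fun i _ ↦ by ring

end Fintype

variable {n : ℕ} {A : Matrix (Fin n) (Fin n) ℝ}

theorem exists_eigenvalues_pos_iff_of_posEigCount_eq_one (hA : A.IsHermitian)
    (h : posEigCount A = 1) : ∃ i₀, ∀ i, 0 < hA.eigenvalues i ↔ i = i₀ := by
  rw [posEigCount, dif_pos hA, Finset.card_eq_one] at h
  obtain ⟨i₀, hi₀⟩ := h
  exact ⟨i₀, fun i ↦ by simpa using Finset.ext_iff.1 hi₀ i⟩

theorem exists_toBilin'_pos_of_posEigCount_eq_one (hA : A.IsHermitian) (hdet : A.det ≠ 0)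
    (h : posEigCount A = 1) :
    ∃ e, 0 < A.toBilin' e e ∧ ∀ x, A.toBilin' e x = 0 → x ≠ 0 → A.toBilin' x x < 0 := by
  obtain ⟨i₀, hi₀⟩ := hA.exists_eigenvalues_pos_iff_of_posEigCount_eq_one h
  have hneg : ∀ i, i ≠ i₀ → hA.eigenvalues i < 0 := fun i hi ↦ by
    refine lt_of_le_of_ne (not_lt.1 fun h ↦ hi ((hi₀ i).1 h)) fun h0 ↦ hdet ?_
    rw [hA.det_eq_prod_eigenvalues]
    exact Finset.prod_eq_zero (Finset.mem_univ i) (by simp [h0])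
  have hunit : hA.eigenvectorBasis i₀ ⬝ᵥ hA.eigenvectorBasis i₀ = 1 := by
    have h := orthonormal_iff_ite.1 hA.eigenvectorBasis.orthonormal i₀ i₀
    rwa [if_pos rfl, EuclideanSpace.inner_eq_star_dotProduct, star_trivial] at h
  refine ⟨hA.eigenvectorBasis i₀, ?_, fun x hx hx0 ↦ ?_⟩
  · rw [toBilin'_apply', hA.eigenvectorBasis_dotProduct_mulVec, hunit, mul_one]
    exact (hi₀ i₀).2 rfl
  rw [toBilin'_apply', hA.eigenvectorBasis_dotProduct_mulVec, mul_eq_zero] at hx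
  have hc₀ : hA.eigenvectorBasis i₀ ⬝ᵥ x = 0 := hx.resolve_left ((hi₀ i₀).2 rfl).ne'
  obtain ⟨j, hj⟩ : ∃ j, hA.eigenvectorBasis j ⬝ᵥ x ≠ 0 := by
    by_contra! hall
    have := hA.eigenvectorBasis.sum_dotProduct_mul_dotProduct x x
    simp only [dotProduct_comm x, hall, mul_zero, Finset.sum_const_zero] at this
    exact hx0 (dotProduct_self_eq_zero.1 this.symm)
  have hji : j ≠ i₀ := by rintro rfl; exact hj hc₀
  rw [toBilin'_apply', hA.dotProduct_mulVec_eq_sum, ← Finset.sum_const_zero]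
  refine Finset.sum_lt_sum (fun i _ ↦ ?_) ⟨j, Finset.mem_univ j, ?_⟩
  · rcases eq_or_ne i i₀ with rfl | hi
    · simp [dotProduct_comm x, hc₀]
    · rw [dotProduct_comm x]
      exact mul_nonpos_of_nonpos_of_nonneg (hneg i hi).le (mul_self_nonneg _)
  · rw [dotProduct_comm x]
    exact mul_neg_of_neg_of_pos (hneg j hji) (mul_self_pos.2 hj)

theorem exists_toBilin'_pos_on_of_isPreconnected (hA : A.IsHermitian) (hdet : A.det ≠ 0)
    (h : posEigCount A = 1) {S : Set (Fin n → ℝ)} (hS : IsPreconnected S)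
    (hSq : ∀ v ∈ S, v ≠ 0 ∧ 0 ≤ A.toBilin' v v) :
    ∃ e, 0 < A.toBilin' e e ∧ (∀ x, A.toBilin' e x = 0 → A.toBilin' x x ≤ 0) ∧
      ∀ v ∈ S, 0 < A.toBilin' e v := by
  obtain ⟨e, he, hneg⟩ := hA.exists_toBilin'_pos_of_posEigCount_eq_one hdet h
  have hnonpos : ∀ x, A.toBilin' e x = 0 → A.toBilin' x x ≤ 0 := fun x hx ↦ by
    rcases eq_or_ne x 0 with rfl | hx0
    · simp
    · exact (hneg x hx hx0).le
  have hS0 : ∀ v ∈ S, A.toBilin' e v ≠ 0 := fun v hv h0 ↦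
    (hneg v h0 (hSq v hv).1).not_ge (hSq v hv).2
  rcases hS.forall_pos_or_forall_neg
      (LinearMap.continuous_of_finiteDimensional (A.toBilin' e)).continuousOn hS0 with hpos | hneg
  · exact ⟨e, he, hnonpos, hpos⟩
  · exact ⟨-e, by simpa using he, fun x hx ↦ hnonpos x (by simpa using hx),
      fun v hv ↦ by simpa using hneg v hv⟩

end Matrix.IsHermitian

namespace LinearMap.BilinForm

variable {V : Type*} [AddCommGroup V] [Module ℝ V] {B : LinearMap.BilinForm ℝ V} {e x y z : V}

def futureCone (B : LinearMap.BilinForm ℝ V) (e : V) : Set V :=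
  {x | 0 ≤ B x x ∧ 0 ≤ B e x}

theorem apply_self_nonpos_of_apply_eq_zero (hB : B.IsSymm) (hneg : ∀ x, B e x = 0 → B x x ≤ 0)
    (hx : 0 < B x x) (hxz : B x z = 0) : B z z ≤ 0 := by
  have hex : B e x ≠ 0 := fun h ↦ (hneg x h).not_gt hx
  -- `w` is `B`-orthogonal to `e`, and `B w w = (B e z)² B x x + (B e x)² B z z`.
  have hw := hneg (B e z • x - B e x • z) (by simp only [map_sub, map_smul, smul_eq_mul]; ring)
  have hzx : B z x = 0 := hB.eq z x ▸ hxz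
  simp only [map_sub, map_smul, LinearMap.sub_apply, LinearMap.smul_apply, smul_eq_mul, hxz,
    hzx] at hw
  nlinarith [mul_self_pos.2 hex, mul_nonneg (mul_self_nonneg (B e z)) hx.le]

theorem apply_pos_of_apply_self_pos (hB : B.IsSymm) (he : 0 < B e e)
    (hneg : ∀ x, B e x = 0 → B x x ≤ 0) (hx : 0 < B x x) (hex : 0 < B e x) (hy : 0 < B y y)
    (hey : 0 < B e y) : 0 < B x y := by
  by_contra! hxy
  -- `z` is `B`-orthogonal to `x`, yet `B z z > 0` when `B x y ≤ 0`.
  have hz := apply_self_nonpos_of_apply_eq_zero hB hneg (z := B x y • e - B e x • y) hx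
    (by simp only [map_sub, map_smul, smul_eq_mul, hB.eq x e]; ring)
  simp only [map_sub, map_smul, LinearMap.sub_apply, LinearMap.smul_apply, smul_eq_mul,
    hB.eq y e] at hz
  nlinarith [mul_nonneg (mul_self_nonneg (B x y)) he.le, mul_pos (mul_self_pos.2 hex.ne') hy,
    mul_nonneg (mul_nonneg (neg_nonneg.2 hxy) hex.le) hey.le]

theorem apply_nonneg_of_mem_futureCone (hB : B.IsSymm) (he : 0 < B e e)
    (hneg : ∀ x, B e x = 0 → B x x ≤ 0) (hx : x ∈ B.futureCone e) (hy : y ∈ B.futureCone e) :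
    0 ≤ B x y := by
  -- Pushing `x` and `y` along `e` makes both inequalities strict.
  have key : ∀ ε : ℝ, 0 < ε → 0 < B x y + ε * (B e x + B e y) + ε ^ 2 * B e e := by
    intro ε hε
    have hpush : ∀ w ∈ B.futureCone e, 0 < B (w + ε • e) (w + ε • e) ∧ 0 < B e (w + ε • e) := by
      rintro w ⟨hww, hew⟩
      simp only [map_add, map_smul, LinearMap.add_apply, LinearMap.smul_apply, smul_eq_mul,
        hB.eq w e]
      constructor <;> nlinarith [mul_pos (mul_pos hε hε) he, mul_nonneg hε.le hew]
    have := apply_pos_of_apply_self_pos hB he hneg (hpush x hx).1 (hpush x hx).2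
      (hpush y hy).1 (hpush y hy).2
    simp only [map_add, map_smul, LinearMap.add_apply, LinearMap.smul_apply, smul_eq_mul,
      hB.eq x e] at this
    linarith
  have hlim : Tendsto (fun ε : ℝ ↦ B x y + ε * (B e x + B e y) + ε ^ 2 * B e e) (𝓝[>] 0)
      (𝓝 (B x y)) := by
    have : Continuous (fun ε : ℝ ↦ B x y + ε * (B e x + B e y) + ε ^ 2 * B e e) := by fun_prop
    simpa using (this.tendsto 0).mono_left nhdsWithin_le_nhds
  exact ge_of_tendsto hlim (eventually_nhdsWithin_of_forall fun ε hε ↦ (key ε hε).le)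

theorem smul_mem_futureCone {c : ℝ} (hc : 0 ≤ c) (hx : x ∈ B.futureCone e) :
    c • x ∈ B.futureCone e := by
  simp only [futureCone, Set.mem_ofPred_eq, map_smul, LinearMap.smul_apply, smul_eq_mul]
  exact ⟨mul_nonneg hc (mul_nonneg hc hx.1), mul_nonneg hc hx.2⟩

theorem convex_futureCone (hB : B.IsSymm) (he : 0 < B e e) (hneg : ∀ x, B e x = 0 → B x x ≤ 0) :
    Convex ℝ (B.futureCone e) := by
  intro x hx y hy a b ha hb _
  have hxy := apply_nonneg_of_mem_futureCone hB he hneg hx hy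
  simp only [futureCone, Set.mem_ofPred_eq, map_add, map_smul, LinearMap.add_apply,
    LinearMap.smul_apply, smul_eq_mul, hB.eq y x]
  constructor
  · nlinarith [mul_nonneg (mul_nonneg ha ha) hx.1, mul_nonneg (mul_nonneg hb hb) hy.1,
      mul_nonneg (mul_nonneg ha hb) hxy]
  · nlinarith [mul_nonneg ha hx.2, mul_nonneg hb hy.2]

theorem pos_of_sub_smul_mem_futureCone (hB : B.IsSymm) (he : 0 < B e e) {t : ℝ} (ht : 0 < t)
    (h : x - t • e ∈ B.futureCone e) : 0 < B x x ∧ 0 < B e x := by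
  obtain ⟨h₁, h₂⟩ := h
  simp only [map_sub, map_smul, LinearMap.sub_apply, LinearMap.smul_apply, smul_eq_mul,
    hB.eq x e] at h₁ h₂
  have hex : 0 < B e x := by nlinarith [mul_pos ht he]
  exact ⟨by nlinarith [mul_pos (mul_pos ht ht) he], hex⟩

theorem pos_of_mem_interior_futureCone [TopologicalSpace V] [ContinuousSub V]
    [ContinuousSMul ℝ V] (hB : B.IsSymm) (he : 0 < B e e) (hx : x ∈ interior (B.futureCone e)) :
    0 < B x x ∧ 0 < B e x := by
  have hlim : Tendsto (fun t : ℝ ↦ x - t • e) (𝓝[>] 0) (𝓝 x) := by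
    have : Continuous (fun t : ℝ ↦ x - t • e) := by fun_prop
    simpa using (this.tendsto 0).mono_left nhdsWithin_le_nhds
  obtain ⟨t, hmem, ht⟩ :=
    ((hlim.eventually (mem_interior_iff_mem_nhds.1 hx)).and self_mem_nhdsWithin).exists
  exact pos_of_sub_smul_mem_futureCone hB he ht hmem

end LinearMap.BilinForm

theorem Matrix.isClosed_futureCone_toBilin' {n : ℕ} (A : Matrix (Fin n) (Fin n) ℝ)
    (e : Fin n → ℝ) : IsClosed (A.toBilin'.futureCone e) := by
  simp only [LinearMap.BilinForm.futureCone, toBilin'_apply', Set.ofPred_and]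
  exact (isClosed_le continuous_const (by fun_prop)).inter
    (isClosed_le continuous_const (by fun_prop))

section ProperCone

variable {E : Type*} [TopologicalSpace E] [AddCommGroup E] [IsTopologicalAddGroup E] [Module ℝ E]
  [ContinuousSMul ℝ E] [LocallyConvexSpace ℝ E]

theorem ProperCone.exists_dual_pos_on_of_isCompact (C : ProperCone ℝ E)
    (hC : ∀ x ∈ C, -x ∈ C → x = 0) {S : Set E} (hS : IsCompact S) (hSC : S ⊆ C) (hS0 : 0 ∉ S) :
    ∃ f : StrongDual ℝ E, (∀ x ∈ C, 0 ≤ f x) ∧ ∀ s ∈ S, 0 < f s := by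
  have hsep : ∀ s : S, ∃ g : StrongDual ℝ E, (∀ x ∈ C, 0 ≤ g x) ∧ g (-s) < 0 := fun s ↦
    C.hyperplane_separation_point fun h ↦ hS0 (hC s (hSC s.2) h ▸ s.2)
  -- Each `g s` is positive near `s`; finitely many of these neighbourhoods cover `S`.
  choose g hgC hgs using hsep
  obtain ⟨t, ht⟩ := hS.elim_finite_subcover (fun s : S ↦ {x | 0 < g s x})
    (fun s ↦ isOpen_lt continuous_const (g s).continuous)
    (fun s hs ↦ Set.mem_iUnion.2 ⟨⟨s, hs⟩, by simpa using hgs ⟨s, hs⟩⟩)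
  refine ⟨∑ i ∈ t, g i, fun x hx ↦ ?_, fun s hs ↦ ?_⟩
  · simpa using Finset.sum_nonneg fun i _ ↦ hgC i x hx
  · obtain ⟨i, hi, hpos⟩ := Set.mem_iUnion₂.1 (ht hs)
    rw [_root_.sum_apply]
    exact hpos.trans_le (Finset.single_le_sum (fun j _ ↦ hgC j s (hSC hs)) hi)

end ProperCone

theorem ProperCone.exists_dual_mul_norm_le {E : Type*} [NormedAddCommGroup E] [NormedSpace ℝ E]
    [FiniteDimensional ℝ E] (C : ProperCone ℝ E) (hC : ∀ x ∈ C, -x ∈ C → x = 0) :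
    ∃ f : StrongDual ℝ E, ∃ m > 0, ∀ x ∈ C, m * ‖x‖ ≤ f x := by
  set S := (C : Set E) ∩ Metric.sphere 0 1
  have hS : IsCompact S := (isCompact_sphere 0 1).inter_left C.isClosed
  obtain ⟨f, -, hfS⟩ := C.exists_dual_pos_on_of_isCompact hC hS Set.inter_subset_left
    (fun h ↦ by simpa using h.2)
  obtain ⟨m, hm, hmS⟩ := hS.exists_forall_le' f.continuous.continuousOn hfS
  refine ⟨f, m, hm, fun x hx ↦ ?_⟩
  rcases eq_or_ne x 0 with rfl | hx0
  · simp
  have hxS : ‖x‖⁻¹ • x ∈ S := ⟨C.smul_mem hx (by positivity), by simp [norm_smul, hx0]⟩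
  have hx' : 0 < ‖x‖ := norm_pos_iff.2 hx0
  have := hmS _ hxS
  rw [map_smul, smul_eq_mul, le_inv_mul_iff₀ hx'] at this
  linarith

def IsProperCone.toProperCone {n : ℕ} {K : Set (Fin n → ℝ)} (hK : IsProperCone K) :
    ProperCone ℝ (Fin n → ℝ) where
  carrier := K
  add_mem' {x y} hx hy := by
    simpa [smul_add, smul_smul] using hK.2.1 2 zero_le_two _
      (hK.1 hx hy (by norm_num : (0 : ℝ) ≤ 1 / 2) (by norm_num : (0 : ℝ) ≤ 1 / 2) (by norm_num))
  zero_mem' := (hK.2.2.2.1.symm ▸ rfl : (0 : Fin n → ℝ) ∈ K ∩ -K).1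
  smul_mem' c x hx := hK.2.1 c c.2 x hx
  isClosed' := hK.2.2.1

theorem IsProperCone.salient {n : ℕ} {K : Set (Fin n → ℝ)} (hK : IsProperCone K) :
    ∀ x ∈ K, -x ∈ K → x = 0 := fun x hx hnx ↦ by
  simpa using hK.2.2.2.1.subset ⟨hx, Set.mem_neg.2 hnx⟩

theorem spansExtremeRay_of_mem_extremePoints {n : ℕ} {C : ProperCone ℝ (Fin n → ℝ)}
    {f : (Fin n → ℝ) →ₗ[ℝ] ℝ} (hf : ∀ x ∈ C, x ≠ 0 → 0 < f x) {v : Fin n → ℝ}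
    (hv : v ∈ ((C : Set (Fin n → ℝ)) ∩ {x | f x = 1}).extremePoints ℝ) :
    SpansExtremeRay C v := by
  obtain ⟨⟨hvC, hfv⟩, hext⟩ := mem_extremePoints.1 hv
  have hv0 : v ≠ 0 := by rintro rfl; simp at hfv
  refine ⟨hvC, hv0, fun x hx y hy hxy ↦ ?_⟩
  have hbase : ∀ w ∈ C, w ≠ 0 → (f w)⁻¹ • w ∈ (C : Set (Fin n → ℝ)) ∩ {x | f x = 1} :=
    fun w hw hw0 ↦ ⟨C.smul_mem hw (inv_nonneg.2 (hf w hw hw0).le),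
      by simp [(hf w hw hw0).ne']⟩
  rcases eq_or_ne x 0 with rfl | hx0
  · exact ⟨⟨0, le_rfl, by simp⟩, ⟨1, zero_le_one, by simp [hxy]⟩⟩
  rcases eq_or_ne y 0 with rfl | hy0
  · exact ⟨⟨1, zero_le_one, by simp [hxy]⟩, ⟨0, le_rfl, by simp⟩⟩
  have hfx := hf x hx hx0
  have hfy := hf y hy hy0
  have hseg : v ∈ openSegment ℝ ((f x)⁻¹ • x) ((f y)⁻¹ • y) :=
    ⟨f x, f y, hfx, hfy, by rw [← map_add, ← hxy, hfv], by
      simp [smul_smul, hfx.ne', hfy.ne', hxy]⟩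
  obtain ⟨hxv, hyv⟩ := hext _ (hbase x hx hx0) _ (hbase y hy hy0) hseg
  exact ⟨⟨f x, hfx.le, by rw [← hxv, smul_smul, mul_inv_cancel₀ hfx.ne', one_smul]⟩,
    ⟨f y, hfy.le, by rw [← hyv, smul_smul, mul_inv_cancel₀ hfy.ne', one_smul]⟩⟩

theorem ProperCone.subset_of_forall_spansExtremeRay_mem {n : ℕ} (C : ProperCone ℝ (Fin n → ℝ))
    (hC : ∀ x ∈ C, -x ∈ C → x = 0) {F : Set (Fin n → ℝ)} (hFconv : Convex ℝ F)
    (hFclosed : IsClosed F) (hF0 : 0 ∈ F) (hFcone : ∀ c : ℝ, 0 ≤ c → ∀ x ∈ F, c • x ∈ F)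
    (hF : ∀ v, SpansExtremeRay C v → v ∈ F) : (C : Set (Fin n → ℝ)) ⊆ F := by
  obtain ⟨f, m, hm, hfm⟩ := C.exists_dual_mul_norm_le hC
  have hf : ∀ x ∈ C, x ≠ 0 → 0 < f x := fun x hx hx0 ↦
    (mul_pos hm (norm_pos_iff.2 hx0)).trans_le (hfm x hx)
  set base := (C : Set (Fin n → ℝ)) ∩ {x | f x = 1}
  have hcompact : IsCompact base := by
    refine Metric.isCompact_of_isClosed_isBounded
      (C.isClosed.inter (isClosed_eq f.continuous continuous_const))
      ((Metric.isBounded_closedBall (x := 0) (r := m⁻¹)).subset fun x ⟨hxC, hfx⟩ ↦ ?_)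
    have hmx : m * ‖x‖ ≤ 1 := hfx ▸ hfm x hxC
    rwa [mem_closedBall_zero_iff, ← one_div, le_div_iff₀' hm]
  have hconvex : Convex ℝ base := C.convex.inter (convex_hyperplane f.isLinear 1)
  have hbaseF : base ⊆ F := by
    rw [← closure_convexHull_extremePoints hcompact hconvex]
    exact closure_minimal (convexHull_min
      (fun v hv ↦ hF v (spansExtremeRay_of_mem_extremePoints (f := f) hf hv)) hFconv) hFclosed
  intro x hx
  rcases eq_or_ne x 0 with rfl | hx0
  · exact hF0
  have hfx := hf x hx hx0
  simpa [smul_smul, hfx.ne'] using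
    hFcone (f x) hfx.le _ (hbaseF ⟨C.smul_mem hx (inv_nonneg.2 hfx.le), by simp [hfx.ne']⟩)

open LinearMap.BilinForm

/-- Let `q(x) = xᵀQx` be a quadratic form whose symmetric matrix `Q` is
nonsingular and has exactly one positive eigenvalue. Let `K` be a proper convex cone whose
set of vectors spanning extreme rays is path-connected. Then `q` is `K`-Lorentzian if and
only if `q(v) ≥ 0` for every `v` spanning an extreme ray of `K`. -/
theorem stmt3 {n : ℕ} (K : Set (Fin n → ℝ)) (hK : IsProperCone K)
    (Q : Matrix (Fin n) (Fin n) ℝ) (hsymm : Q.IsHermitian) (hns : Q.det ≠ 0)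
    (heig : posEigCount Q = 1)
    (hpath : IsPathConnected {v : Fin n → ℝ | SpansExtremeRay K v}) :
    IsLorentzianMatrix K Q ↔
      ∀ v : Fin n → ℝ, SpansExtremeRay K v → 0 ≤ v ⬝ᵥ (Q *ᵥ v) := by
  constructor
  · rintro ⟨-, hpos⟩ v hv
    have hclosed : IsClosed {x : Fin n → ℝ | 0 ≤ x ⬝ᵥ Q *ᵥ x} :=
      isClosed_le continuous_const (by fun_prop)
    exact hK.1.subset_of_interior_subset hK.2.2.2.2 hclosed (fun x hx ↦ (hpos x hx x hx).le) hv.1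
  · simp only [IsLorentzianMatrix, ← toBilin'_apply']
    intro hv
    obtain ⟨e, he, hneg, hpos⟩ := hsymm.exists_toBilin'_pos_on_of_isPreconnected hns heig
      hpath.isConnected.isPreconnected fun v hv' ↦ ⟨hv'.2.1, hv v hv'⟩
    have hB : Q.toBilin'.IsSymm :=
      Matrix.isSymm_toBilin'_iff_isSymm.2 (Matrix.isHermitian_iff_isSymm.1 hsymm)
    have hKF : K ⊆ Q.toBilin'.futureCone e :=
      hK.toProperCone.subset_of_forall_spansExtremeRay_mem hK.salient
        (convex_futureCone hB he hneg) (Q.isClosed_futureCone_toBilin' e) (by simp [futureCone])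
        (fun c hc x hx ↦ smul_mem_futureCone hc hx) fun v hv' ↦ ⟨hv v hv', (hpos v hv').le⟩
    refine ⟨heig, fun x hx y hy ↦ ?_⟩
    obtain ⟨hxx, hex⟩ := pos_of_mem_interior_futureCone hB he (interior_mono hKF hx)
    obtain ⟨hyy, hey⟩ := pos_of_mem_interior_futureCone hB he (interior_mono hKF hy)
    exact apply_pos_of_apply_self_pos hB he hneg hyy hey hxx hex
end

section
/- Let q be a quadratic form on the space S^n of real symmetric n×n matrices whose matrix Q (with respect to the trace inner product) is nonsingular and has exactly one positive eigenvalue (counted with multiplicity). Then q is S^n_+-Lorentzian if and only if the quartic polynomial x ↦ q(xxᵀ) is nonnegative for all x ∈ ℝ^n. -/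
/-!
Write `B(A, C) = tr(A · T C)` and fix `e` with `q e > 0`. Since `q ≤ 0` on `e^⊥ = ker B(e, ·)`,
Cauchy–Schwarz for `-B` on `e^⊥` gives a reverse Cauchy–Schwarz inequality, so `B ≥ 0` on the
forward cone `{w : q w ≥ 0, B(e, w) ≥ 0}`, which is therefore closed under addition; nondegeneracy
makes `e^⊥` free of nonzero vectors with `q ≥ 0`.

If `q(xxᵀ) ≥ 0` for all `x`, then `x ↦ B(e, xxᵀ) = xᵀ (T e) x` vanishes only at `0`, so it has
constant sign and, after replacing `e` by `-e`, every `xxᵀ`, hence every sum of them, i.e. all of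
`Sⁿ₊`, lies in the forward cone. Thus `B(Y, ·) ≥ 0` on `Sⁿ₊`, and it cannot vanish at an interior
point `X` unless `Y = 0`, which is not interior. Conversely, a Lorentzian `q` is positive on
positive definite matrices, and `xxᵀ` is a limit of those.
-/

open Matrix

/-- The space `Sⁿ` of real symmetric `n × n` matrices, as a submodule of all matrices. -/
def symMat (n : ℕ) : Submodule ℝ (Matrix (Fin n) (Fin n) ℝ) where
  carrier := {A | A.IsSymm}
  add_mem' := fun ha hb => ha.add hb
  zero_mem' := Matrix.isSymm_zero
  smul_mem' := fun c _ hA => hA.smul c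

/-- The quadratic form `q(A) = ⟨A, T A⟩ = tr (A · T A)` on `Sⁿ` associated with the linear
map `T : Sⁿ → Sⁿ` (the matrix of `q` with respect to the trace inner product is the matrix
of `T`). -/
noncomputable def qformS {n : ℕ} (T : ↥(symMat n) →ₗ[ℝ] ↥(symMat n)) (A : ↥(symMat n)) :
    ℝ :=
  ((A : Matrix (Fin n) (Fin n) ℝ) * ((T A : ↥(symMat n)) : Matrix (Fin n) (Fin n) ℝ)).trace

/-- `T` is self-adjoint with respect to the trace inner product on `Sⁿ`, i.e. the matrix of
the quadratic form `qformS T` is symmetric. -/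
def IsSelfAdjointTrace {n : ℕ} (T : ↥(symMat n) →ₗ[ℝ] ↥(symMat n)) : Prop :=
  ∀ A B : ↥(symMat n),
    (((T A : ↥(symMat n)) : Matrix (Fin n) (Fin n) ℝ) * (B : Matrix (Fin n) (Fin n) ℝ)).trace
      = ((A : Matrix (Fin n) (Fin n) ℝ) * ((T B : ↥(symMat n)) : Matrix (Fin n) (Fin n) ℝ)).trace

/-- The (self-adjoint) map `T` has exactly one positive eigenvalue, counted with
multiplicity, expressed variationally: the associated quadratic form is positive somewhere,
and every two-dimensional subspace contains a nonzero vector where it is nonpositive. -/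
def HasExactlyOnePosEig {n : ℕ} (T : ↥(symMat n) →ₗ[ℝ] ↥(symMat n)) : Prop :=
  (∃ A : ↥(symMat n), 0 < qformS T A) ∧
    ∀ W : Submodule ℝ ↥(symMat n), Module.finrank ℝ ↥W = 2 →
      ∃ v ∈ W, v ≠ 0 ∧ qformS T v ≤ 0

/-- The cone `Sⁿ₊` of positive semidefinite matrices inside `Sⁿ`. -/
def PSDcone (n : ℕ) : Set ↥(symMat n) :=
  {A | Matrix.PosSemidef (A : Matrix (Fin n) (Fin n) ℝ)}

/-- The quadratic form on `Sⁿ` associated with `T` is `Sⁿ₊`-Lorentzian: its matrix has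
exactly one positive eigenvalue and `⟨Y, T X⟩ > 0` for all `X, Y` in the interior of `Sⁿ₊`. -/
def IsLorentzianPSD {n : ℕ} (T : ↥(symMat n) →ₗ[ℝ] ↥(symMat n)) : Prop :=
  HasExactlyOnePosEig T ∧
    ∀ X ∈ interior (PSDcone n), ∀ Y ∈ interior (PSDcone n),
      0 < ((Y : Matrix (Fin n) (Fin n) ℝ) *
            ((T X : ↥(symMat n)) : Matrix (Fin n) (Fin n) ℝ)).trace

/-- The rank-one symmetric matrix `xxᵀ` as an element of `Sⁿ`. -/
def rankOneSym {n : ℕ} (x : Fin n → ℝ) : ↥(symMat n) :=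
  ⟨Matrix.vecMulVec x x, by
    show (Matrix.vecMulVec x x)ᵀ = Matrix.vecMulVec x x
    ext i j
    simp [Matrix.vecMulVec_apply, mul_comm]⟩

open Filter Topology LinearMap.BilinForm

theorem LinearMap.eq_zero_of_nonneg_of_mem_interior {E : Type*} [AddCommGroup E] [Module ℝ E]
    [TopologicalSpace E] [ContinuousAdd E] [ContinuousSMul ℝ E] (f : E →ₗ[ℝ] ℝ) {S : Set E}
    (hf : ∀ y ∈ S, 0 ≤ f y) {x : E} (hx : x ∈ interior S) (hfx : f x = 0) : f = 0 := by
  ext z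
  have hline : Continuous fun δ : ℝ => x + δ • z := by fun_prop
  have hmin : IsLocalMin (fun δ : ℝ => δ * f z) 0 := by
    filter_upwards [hline.continuousAt.preimage_mem_nhds
      (by simpa using mem_interior_iff_mem_nhds.1 hx)] with δ hδ
    simpa [hfx] using hf _ hδ
  exact hmin.hasDerivAt_eq_zero (hasDerivAt_mul_const _)

theorem Matrix.nonneg_or_nonpos_of_dotProduct_mulVec_ne_zero {ι : Type*} [Fintype ι]
    {M : Matrix ι ι ℝ} (hM : ∀ x ≠ 0, x ⬝ᵥ M *ᵥ x ≠ 0) :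
    (∀ x, 0 ≤ x ⬝ᵥ M *ᵥ x) ∨ (∀ x, x ⬝ᵥ M *ᵥ x ≤ 0) := by
  by_contra! h
  obtain ⟨⟨x, hx⟩, ⟨y, hy⟩⟩ := h
  have hexpand (s : ℝ) : (s • x + y) ⬝ᵥ M *ᵥ (s • x + y) =
      x ⬝ᵥ M *ᵥ x * (s * s) + (x ⬝ᵥ M *ᵥ y + y ⬝ᵥ M *ᵥ x) * s + y ⬝ᵥ M *ᵥ y := by
    simp only [mulVec_add, mulVec_smul, dotProduct_add, add_dotProduct, dotProduct_smul,
      smul_dotProduct, smul_eq_mul]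
    ring
  have hdisc : 0 ≤ discrim (x ⬝ᵥ M *ᵥ x) (x ⬝ᵥ M *ᵥ y + y ⬝ᵥ M *ᵥ x) (y ⬝ᵥ M *ᵥ y) := by
    rw [discrim]
    nlinarith [sq_nonneg (x ⬝ᵥ M *ᵥ y + y ⬝ᵥ M *ᵥ x)]
  -- a positive discriminant yields an isotropic vector `s • x + y`, necessarily zero
  obtain ⟨s, hs⟩ := exists_quadratic_eq_zero hx.ne ⟨_, (Real.mul_self_sqrt hdisc).symm⟩
  have hsxy : s • x + y = 0 := by
    by_contra hne
    exact hM _ hne (by rw [hexpand, hs])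
  have hy' : y = (-s) • x := by rw [neg_smul, ← sub_eq_zero, sub_neg_eq_add, add_comm, hsxy]
  rw [hy', mulVec_smul, dotProduct_smul, smul_dotProduct, smul_eq_mul, smul_eq_mul] at hy
  nlinarith [sq_nonneg s]

theorem Matrix.eventually_nhds_forall_dotProduct_mulVec_pos {ι : Type*} [Fintype ι]
    {X : Matrix ι ι ℝ} (hX : ∀ v ≠ 0, 0 < v ⬝ᵥ X *ᵥ v) :
    ∀ᶠ A in 𝓝 X, ∀ v ≠ 0, 0 < v ⬝ᵥ A *ᵥ v := by
  have hcont : Continuous fun p : Matrix ι ι ℝ × (ι → ℝ) => p.2 ⬝ᵥ p.1 *ᵥ p.2 := by fun_prop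
  have hsphere := (isCompact_sphere (0 : ι → ℝ) 1).eventually_forall_of_forall_eventually
    (x₀ := X) (P := fun A v => 0 < v ⬝ᵥ A *ᵥ v) fun v hv =>
      (hcont.tendsto (X, v)).eventually (lt_mem_nhds (hX v (ne_zero_of_mem_unit_sphere ⟨v, hv⟩)))
  filter_upwards [hsphere] with A hA v hv
  have hnv : 0 < ‖v‖ := norm_pos_iff.2 hv
  have hunit := hA (‖v‖⁻¹ • v) (by simp [norm_smul, hnv.ne'])
  rw [mulVec_smul, dotProduct_smul, smul_dotProduct, smul_eq_mul, smul_eq_mul] at hunit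
  exact (mul_pos_iff_of_pos_left (inv_pos.2 hnv)).1
    ((mul_pos_iff_of_pos_left (inv_pos.2 hnv)).1 hunit)

namespace LinearMap.BilinForm

variable {V : Type*} [AddCommGroup V] [Module ℝ V] {B : LinearMap.BilinForm ℝ V}

def forwardCone (B : LinearMap.BilinForm ℝ V) (e : V) : Set V :=
  {w | 0 ≤ B w w ∧ 0 ≤ B e w}

variable (hB : B.IsSymm)
  (hB₂ : ∀ W : Submodule ℝ V, Module.finrank ℝ W = 2 → ∃ v ∈ W, v ≠ 0 ∧ B v v ≤ 0)
  {e : V} (he : 0 < B e e)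
include hB hB₂ he

theorem apply_self_nonpos_of_apply_eq_zero_s6 {w : V} (hw : B e w = 0) : B w w ≤ 0 := by
  by_contra! hpos
  have hwe : B w e = 0 := by rw [← hB.eq, hw]
  have hind : LinearIndependent ℝ ![e, w] := by
    refine LinearIndependent.pair_iff.2 fun s t hst => ?_
    have h₁ := congrArg (B e) hst
    have h₂ := congrArg (B w) hst
    simp only [map_add, map_smul, smul_eq_mul, hw, hwe, map_zero] at h₁ h₂
    exact ⟨by simpa [he.ne'] using h₁, by simpa [hpos.ne'] using h₂⟩
  obtain ⟨v, hv, hv₀, hvB⟩ := hB₂ _ ((finrank_span_eq_card hind).trans (by simp))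
  obtain ⟨s, t, rfl⟩ := Submodule.mem_span_pair.1 (by simpa [Set.pair_comm] using hv)
  have hst : s ≠ 0 ∨ t ≠ 0 := by
    by_contra! h
    simp [h.1, h.2] at hv₀
  simp only [map_add, map_smul, LinearMap.add_apply, LinearMap.smul_apply, smul_eq_mul, hw,
    hwe] at hvB
  rcases hst with hs | ht
  · nlinarith [mul_pos (mul_self_pos.2 hs) he, mul_self_nonneg t]
  · nlinarith [mul_pos (mul_self_pos.2 ht) hpos, mul_self_nonneg s]

theorem apply_self_mul_apply_self_le_sq (w : V) : B e e * B w w ≤ B e w ^ 2 := by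
  have hu : B e (B e w • e - B e e • w) = 0 := by simp [mul_comm]
  have key := apply_self_nonpos_of_apply_eq_zero_s6 hB hB₂ he hu
  rw [apply_smul_sub_smul_sub_eq, hB.eq w e] at key
  nlinarith [key]

theorem sq_apply_sub_le (w z : V) :
    (B e e * B w z - B e w * B e z) ^ 2 ≤
      (B e w ^ 2 - B e e * B w w) * (B e z ^ 2 - B e e * B z z) := by
  -- Cauchy–Schwarz for `-B` on `ker (B e)`, applied to the components of `w, z` orthogonal to `e`
  set K := LinearMap.ker (B e)
  let B' : LinearMap.BilinForm ℝ K := -B.compl₁₂ K.subtype K.subtype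
  have hB'symm : B'.IsSymm := ⟨fun x y => by simp [B', ← hB.eq x y]⟩
  have hB'nonneg (x : K) : 0 ≤ B' x x :=
    neg_nonneg.2 (apply_self_nonpos_of_apply_eq_zero_s6 hB hB₂ he x.2)
  let u : K := ⟨B e w • e - B e e • w, by simp [K, mul_comm]⟩
  let v : K := ⟨B e z • e - B e e • z, by simp [K, mul_comm]⟩
  have hCS := B'.apply_sq_le_of_symm hB'nonneg (isSymm_iff.1 hB'symm) u v
  simp only [B', u, v, LinearMap.neg_apply, LinearMap.compl₁₂_apply, Submodule.subtype_apply,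
    map_sub, map_smul, LinearMap.sub_apply, LinearMap.smul_apply, smul_eq_mul,
    hB.eq w e, hB.eq z e] at hCS
  have hc : 0 < B e e ^ 2 := by positivity
  nlinarith [hCS]

theorem apply_nonneg_of_mem_forwardCone {w z : V} (hw : w ∈ forwardCone B e)
    (hz : z ∈ forwardCone B e) : 0 ≤ B w z := by
  have hAczel := sq_apply_sub_le hB hB₂ he w z
  have hw' := apply_self_mul_apply_self_le_sq hB hB₂ he w
  have hz' := apply_self_mul_apply_self_le_sq hB hB₂ he z
  have hbound : (B e e * B w z - B e w * B e z) ^ 2 ≤ (B e w * B e z) ^ 2 := by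
    calc _ ≤ (B e w ^ 2 - B e e * B w w) * (B e z ^ 2 - B e e * B z z) := hAczel
      _ ≤ B e w ^ 2 * B e z ^ 2 := by
          apply mul_le_mul <;> nlinarith [hw.1, hz.1, sq_nonneg (B e w)]
      _ = (B e w * B e z) ^ 2 := by ring
  have := (abs_le_of_sq_le_sq' hbound (mul_nonneg hw.2 hz.2)).1
  exact nonneg_of_mul_nonneg_right (by linarith) he

theorem add_mem_forwardCone {w z : V} (hw : w ∈ forwardCone B e) (hz : z ∈ forwardCone B e) :
    w + z ∈ forwardCone B e := by
  have := apply_nonneg_of_mem_forwardCone hB hB₂ he hw hz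
  constructor
  · simp only [map_add, LinearMap.add_apply, ← hB.eq w z]
    linarith [hw.1, hz.1]
  · simpa only [map_add] using add_nonneg hw.2 hz.2

theorem eq_zero_of_apply_eq_zero (hsep : B.SeparatingRight) {w : V} (hw : 0 ≤ B w w)
    (hew : B e w = 0) : w = 0 := by
  have hww : B w w = 0 := le_antisymm (apply_self_nonpos_of_apply_eq_zero_s6 hB hB₂ he hew) hw
  refine hsep w fun z => ?_
  have := sq_apply_sub_le hB hB₂ he z w
  rw [hww, hew] at this
  have : (B e e * B z w) ^ 2 = 0 := by nlinarith [sq_nonneg (B e e * B z w)]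
  simpa [he.ne'] using this

theorem apply_pos_of_mem_interior [TopologicalSpace V] [ContinuousAdd V] [ContinuousSMul ℝ V]
    (hsep : B.SeparatingRight) {K : Set V} (hK : K ⊆ forwardCone B e) {X Y : V}
    (hX : X ∈ interior K) (hY : Y ∈ interior K) : 0 < B Y X := by
  have hnonneg (Z : V) (hZ : Z ∈ interior K) : ∀ W ∈ K, 0 ≤ B Z W := fun W hW =>
    apply_nonneg_of_mem_forwardCone hB hB₂ he (hK (interior_subset hZ)) (hK hW)
  refine (hnonneg Y hY X (interior_subset hX)).lt_of_ne fun hYX => ?_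
  have hY₀ : Y = 0 := by
    refine hsep Y fun Z => ?_
    rw [← hB.eq, (B Y).eq_zero_of_nonneg_of_mem_interior (hnonneg Y hY) hX hYX.symm]
    rfl
  rw [hY₀] at hY
  have := (B e).eq_zero_of_nonneg_of_mem_interior (fun W hW => (hK hW).2) hY (map_zero _)
  exact he.ne' (LinearMap.congr_fun this e)

end LinearMap.BilinForm

/-- `traceBilinForm T A C = tr (A · T C)`, so that `qformS T A = traceBilinForm T A A` by `rfl`. -/
noncomputable def traceBilinForm {n : ℕ} (T : ↥(symMat n) →ₗ[ℝ] ↥(symMat n)) :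
    LinearMap.BilinForm ℝ ↥(symMat n) :=
  ((LinearMap.mul ℝ (Matrix (Fin n) (Fin n) ℝ)).compr₂ (Matrix.traceLinearMap (Fin n) ℝ ℝ)).compl₁₂
    (symMat n).subtype ((symMat n).subtype ∘ₗ T)

section TraceForm

variable {n : ℕ} {T : ↥(symMat n) →ₗ[ℝ] ↥(symMat n)}

@[simp]
theorem coe_rankOneSym (x : Fin n → ℝ) :
    (rankOneSym x : Matrix (Fin n) (Fin n) ℝ) = vecMulVec x x := rfl

theorem IsSelfAdjointTrace.isSymm (hsa : IsSelfAdjointTrace T) : (traceBilinForm T).IsSymm :=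
  ⟨fun A C => by
    show trace (A.1 * (T C).1) = trace (C.1 * (T A).1)
    rw [← hsa, trace_mul_comm]⟩

theorem separatingRight_traceBilinForm (hns : Function.Injective T) :
    (traceBilinForm T).SeparatingRight := by
  intro C hC
  have hTC : ((T C : ↥(symMat n)) : Matrix (Fin n) (Fin n) ℝ) = 0 := by
    rw [← trace_conjTranspose_mul_self_eq_zero_iff, conjTranspose_eq_transpose_of_trivial,
      (T C).2.eq]
    exact hC (T C)
  exact hns (by rw [map_zero]; exact Subtype.ext hTC)

theorem traceBilinForm_rankOneSym (hsa : IsSelfAdjointTrace T) (A : ↥(symMat n))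
    (x : Fin n → ℝ) :
    traceBilinForm T A (rankOneSym x) =
      x ⬝ᵥ ((T A : ↥(symMat n)) : Matrix (Fin n) (Fin n) ℝ) *ᵥ x := by
  show trace (A.1 * (T (rankOneSym x)).1) = _
  rw [← hsa, coe_rankOneSym, mul_vecMulVec, trace_vecMulVec, dotProduct_comm]

theorem rankOneSym_eq_zero_iff {x : Fin n → ℝ} : rankOneSym x = 0 ↔ x = 0 := by
  refine ⟨fun h => funext fun i => ?_, fun h => by subst h; ext; simp [rankOneSym]⟩
  simpa [vecMulVec_apply] using congrFun (congrFun (congrArg Subtype.val h) i) i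

theorem posDef_mem_interior_PSDcone {X : ↥(symMat n)}
    (hX : (X : Matrix (Fin n) (Fin n) ℝ).PosDef) : X ∈ interior (PSDcone n) := by
  rw [mem_interior_iff_mem_nhds]
  filter_upwards [continuous_subtype_val.continuousAt.preimage_mem_nhds
    (eventually_nhds_forall_dotProduct_mulVec_pos fun v hv => by
      simpa using hX.dotProduct_mulVec_pos hv)] with A hA
  exact (PosDef.of_dotProduct_mulVec_pos (isHermitian_iff_isSymm.2 A.2)
    fun v hv => by simpa using hA v hv).posSemidef

theorem continuous_qformS : Continuous (qformS T) := by
  have := T.continuous_of_finiteDimensional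
  unfold qformS
  fun_prop

theorem exists_eq_sum_rankOneSym {Z : ↥(symMat n)} (hZ : Z ∈ PSDcone n) :
    ∃ (m : ℕ) (v : Fin m → Fin n → ℝ), Z = ∑ i, rankOneSym (v i) := by
  obtain ⟨m, v, hv⟩ := Matrix.posSemidef_iff_eq_sum_vecMulVec.1 hZ
  exact ⟨m, v, Subtype.ext (by simpa [Submodule.coe_sum] using hv)⟩

theorem PSDcone_subset_forwardCone (hsa : IsSelfAdjointTrace T) (heig : HasExactlyOnePosEig T)
    {e : ↥(symMat n)} (he : 0 < qformS T e)
    (hrank : ∀ x, rankOneSym x ∈ forwardCone (traceBilinForm T) e) :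
    PSDcone n ⊆ forwardCone (traceBilinForm T) e := by
  intro Z hZ
  obtain ⟨m, v, rfl⟩ := exists_eq_sum_rankOneSym hZ
  exact Finset.sum_induction _ (· ∈ forwardCone _ e)
    (fun _ _ => add_mem_forwardCone hsa.isSymm heig.2 he) (by simp [forwardCone])
    fun i _ => hrank (v i)

theorem exists_forwardCone_rankOneSym (hsa : IsSelfAdjointTrace T) (hns : Function.Injective T)
    (heig : HasExactlyOnePosEig T) (hq : ∀ x : Fin n → ℝ, 0 ≤ qformS T (rankOneSym x)) :
    ∃ e, 0 < qformS T e ∧ ∀ x, rankOneSym x ∈ forwardCone (traceBilinForm T) e := by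
  obtain ⟨e, he⟩ := heig.1
  have hdef (x : Fin n → ℝ) (hx : x ≠ 0) :
      x ⬝ᵥ ((T e : ↥(symMat n)) : Matrix (Fin n) (Fin n) ℝ) *ᵥ x ≠ 0 := fun h₀ =>
    hx <| rankOneSym_eq_zero_iff.1 <| eq_zero_of_apply_eq_zero hsa.isSymm heig.2 he
      (separatingRight_traceBilinForm hns) (hq x) (by rw [traceBilinForm_rankOneSym hsa, h₀])
  rcases nonneg_or_nonpos_of_dotProduct_mulVec_ne_zero hdef with h | h
  · exact ⟨e, he, fun x => ⟨hq x, by rw [traceBilinForm_rankOneSym hsa]; exact h x⟩⟩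
  · refine ⟨-e, ?_, fun x => ⟨hq x, ?_⟩⟩
    · show 0 < traceBilinForm T (-e) (-e)
      rwa [map_neg, map_neg, LinearMap.neg_apply, neg_neg]
    · rw [map_neg, LinearMap.neg_apply, traceBilinForm_rankOneSym hsa]
      linarith [h x]

theorem qformS_rankOneSym_nonneg
    (hT : ∀ X ∈ interior (PSDcone n), 0 < qformS T X) (x : Fin n → ℝ) :
    0 ≤ qformS T (rankOneSym x) := by
  let I : ↥(symMat n) := ⟨1, isSymm_one⟩
  have hpos (ε : ℝ) (hε : 0 < ε) : 0 < qformS T (rankOneSym x + ε • I) :=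
    hT _ <| posDef_mem_interior_PSDcone <|
      (PosDef.one.smul hε).posSemidef_add (by simpa using posSemidef_vecMulVec_self_star x)
  have hlim : Tendsto (fun ε : ℝ => qformS T (rankOneSym x + ε • I)) (𝓝[>] 0)
      (𝓝 (qformS T (rankOneSym x))) := by
    have : Continuous fun ε : ℝ => qformS T (rankOneSym x + ε • I) :=
      continuous_qformS.comp (by fun_prop)
    simpa using (this.continuousWithinAt (s := Set.Ioi 0) (x := 0)).tendsto
  exact ge_of_tendsto hlim (eventually_nhdsWithin_of_forall fun ε hε => (hpos ε hε).le)

end TraceForm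

/-- Let `q` be a quadratic form on the space `Sⁿ` of real symmetric
`n × n` matrices, represented by the self-adjoint linear map `T` with respect to the trace
inner product (so `q(X) = ⟨X, T X⟩`), whose matrix is nonsingular and has exactly one
positive eigenvalue. Then `q` is `Sⁿ₊`-Lorentzian if and only if the quartic polynomial
`x ↦ q(xxᵀ)` is nonnegative on `ℝⁿ`. -/
theorem stmt6 {n : ℕ} (T : ↥(symMat n) →ₗ[ℝ] ↥(symMat n))
    (hsa : IsSelfAdjointTrace T) (hns : Function.Injective T)
    (heig : HasExactlyOnePosEig T) :
    IsLorentzianPSD T ↔ ∀ x : Fin n → ℝ, 0 ≤ qformS T (rankOneSym x) := by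
  refine ⟨fun hL => qformS_rankOneSym_nonneg fun X hX => hL.2 X hX X hX, fun hq => ?_⟩
  obtain ⟨e, he, hrank⟩ := exists_forwardCone_rankOneSym hsa hns heig hq
  exact ⟨heig, fun X hX Y hY => apply_pos_of_mem_interior hsa.isSymm heig.2 he
    (separatingRight_traceBilinForm hns) (PSDcone_subset_forwardCone hsa heig he hrank) hX hY⟩
end

section
/- Let Q be a real symmetric n×n matrix and a ∈ ℝ^n a vector with aᵀQa > 0. Then the following are equivalent: (a) Q has exactly one positive eigenvalue (counted with multiplicity); (b) for every t ≥ 1 the matrix (aᵀQa)·Q − t·(Qa)(Qa)ᵀ is negative semidefinite; (c) the quadratic form x ↦ xᵀQx is negative semidefinite on the hyperplane {b ∈ ℝ^n : bᵀQa = 0}. -/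
open Matrix

/-!
The number of positive eigenvalues of `Q` is the positive index `sigPos` of the quadratic form
`x ↦ xᵀQx` (Sylvester's law of inertia, read off in an orthonormal eigenbasis): the largest
dimension of a subspace on which the form is positive definite, while every subspace on which it
is negative semidefinite has dimension at most `n - sigPos`. As `aᵀQa > 0`, the line through `a`
gives `sigPos ≥ 1` and the hyperplane `{b : bᵀQa = 0}` has codimension one, so (c) forces
`sigPos ≤ 1`; conversely a `b` in that hyperplane with `bᵀQb > 0` would span with `a` a positive
definite plane. For (b) ⟺ (c), the form of the matrix in (b) is `t (xᵀQa)² - (aᵀQa) (xᵀQx)`, and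
(c) at `b = (aᵀQa) x - (xᵀQa) a` is the reverse Cauchy–Schwarz inequality
`(aᵀQa) (xᵀQx) ≤ (xᵀQa)²`.
-/

open Module QuadraticMap

lemma QuadraticMap.IsOrtho.map_smul_add_smul {R M N : Type*} [CommRing R] [AddCommGroup M]
    [AddCommGroup N] [Module R M] [Module R N] {Q : QuadraticMap R M N} {a b : M}
    (h : Q.IsOrtho a b) (s t : R) : Q (s • a + t • b) = (s * s) • Q a + (t * t) • Q b := by
  have h' : Q.IsOrtho (s • a) (t • b) := by
    rw [← isOrtho_polarBilin, map_smul, LinearMap.map_smul₂, isOrtho_polarBilin.mpr h,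
      smul_zero, smul_zero]
  rw [isOrtho_def.mp h', QuadraticMap.map_smul, QuadraticMap.map_smul]

section OrderedField

variable {𝕜 : Type*} [Field 𝕜] [LinearOrder 𝕜] [IsStrictOrderedRing 𝕜]

lemma mul_self_mul_add_mul_self_mul_nonpos_iff {p q s t : 𝕜} (hp : 0 < p) (hq : 0 < q) :
    s * s * p + t * t * q ≤ 0 ↔ s = 0 ∧ t = 0 := by
  refine ⟨fun h => ?_, by rintro ⟨rfl, rfl⟩; simp⟩
  have hs : 0 ≤ s * s * p := mul_nonneg (mul_self_nonneg s) hp.le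
  have ht : 0 ≤ t * t * q := mul_nonneg (mul_self_nonneg t) hq.le
  exact ⟨mul_self_eq_zero.mp ((mul_eq_zero.mp (by linarith)).resolve_right hp.ne'),
    mul_self_eq_zero.mp ((mul_eq_zero.mp (by linarith)).resolve_right hq.ne')⟩

namespace QuadraticForm

variable {V : Type*} [AddCommGroup V] [Module 𝕜 V] {Q : QuadraticForm 𝕜 V} {a b : V}

lemma posDef_restrict_span_singleton (ha : 0 < Q a) :
    (Q.restrict (Submodule.span 𝕜 {a})).PosDef := by
  rintro ⟨x, hx⟩ hx0
  obtain ⟨s, rfl⟩ := Submodule.mem_span_singleton.mp hx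
  have hs : s ≠ 0 := by rintro rfl; simp at hx0
  rw [restrict_apply, QuadraticMap.map_smul, smul_eq_mul]
  exact mul_pos (mul_self_pos.mpr hs) ha

lemma posDef_restrict_span_pair (ha : 0 < Q a) (hb : 0 < Q b) (h : Q.IsOrtho a b) :
    (Q.restrict (Submodule.span 𝕜 {a, b})).PosDef := by
  rintro ⟨x, hx⟩ hx0
  obtain ⟨s, t, rfl⟩ := Submodule.mem_span_pair.mp hx
  rw [restrict_apply, h.map_smul_add_smul, smul_eq_mul, smul_eq_mul]
  by_contra! hle
  obtain ⟨rfl, rfl⟩ := (mul_self_mul_add_mul_self_mul_nonpos_iff ha hb).mp hle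
  simp at hx0

lemma finrank_span_pair_of_isOrtho (ha : 0 < Q a) (hb : 0 < Q b) (h : Q.IsOrtho a b) :
    finrank 𝕜 (Submodule.span 𝕜 {a, b}) = 2 := by
  have hli : LinearIndependent 𝕜 ![a, b] := LinearIndependent.pair_iff.mpr fun s t hst =>
    (mul_self_mul_add_mul_self_mul_nonpos_iff ha hb).mp <| by
      have hzero := h.map_smul_add_smul s t
      rw [hst, QuadraticMap.map_zero, smul_eq_mul, smul_eq_mul] at hzero
      exact hzero.symm.le
  have := finrank_span_eq_card hli
  rwa [Matrix.range_cons_cons_empty, Fintype.card_fin] at this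

theorem sigPos_eq_one_iff [FiniteDimensional 𝕜 V] (ha : 0 < Q a) :
    sigPos Q = 1 ↔ ∀ b, Q.IsOrtho a b → Q b ≤ 0 := by
  constructor
  · intro hsig b hab
    by_contra! hb
    have := le_sigPos_of_posDef Q (posDef_restrict_span_pair ha hb hab)
    rw [finrank_span_pair_of_isOrtho ha hb hab] at this
    omega
  · intro hnonpos
    have ha0 : a ≠ 0 := by rintro rfl; simp at ha
    have hge := le_sigPos_of_posDef Q (posDef_restrict_span_singleton ha)
    rw [finrank_span_singleton ha0] at hge
    have hpolar : Q.polarBilin a ≠ 0 := fun h0 => by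
      have := LinearMap.congr_fun h0 a
      rw [polarBilin_apply_apply, polar_self, LinearMap.zero_apply, two_smul] at this
      linarith
    have hker := Module.Dual.finrank_ker_add_one_of_ne_zero hpolar
    have hle := sigPos_add_finrank_le_of_nonpos (V := LinearMap.ker (Q.polarBilin a))
      fun b hb => hnonpos b (isOrtho_polarBilin.mp hb)
    omega

end QuadraticForm

end OrderedField

namespace Matrix

variable {ι : Type*} [Fintype ι] {A : Matrix ι ι ℝ}

lemma IsHermitian.dotProduct_mulVec_comm (hA : A.IsHermitian) (x y : ι → ℝ) :
    x ⬝ᵥ (A *ᵥ y) = y ⬝ᵥ (A *ᵥ x) := by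
  rw [dotProduct_mulVec, ← mulVec_transpose, (isHermitian_iff_isSymm.mp hA).eq, dotProduct_comm]

section Inertia

variable [DecidableEq ι]

lemma toQuadraticForm'_apply (x : ι → ℝ) : A.toQuadraticForm' x = x ⬝ᵥ (A *ᵥ x) :=
  toLinearMap₂'_apply' A x x

lemma IsHermitian.isOrtho_toQuadraticForm'_iff (hA : A.IsHermitian) {x y : ι → ℝ} :
    A.toQuadraticForm'.IsOrtho x y ↔ y ⬝ᵥ (A *ᵥ x) = 0 := by
  have hsymm : (toLinearMap₂' ℝ A).IsSymm := LinearMap.isSymm_def.mpr fun x y => by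
    simp only [toLinearMap₂'_apply', RingHom.id_apply]
    exact hA.dotProduct_mulVec_comm x y
  rw [toQuadraticForm', LinearMap.BilinForm.toQuadraticMap_isOrtho hsymm,
    toLinearMap₂'_apply', hA.dotProduct_mulVec_comm]

lemma IsHermitian.dotProduct_mulVec_eigenvectorBasis (hA : A.IsHermitian) (i j : ι) :
    (hA.eigenvectorBasis i).ofLp ⬝ᵥ (A *ᵥ (hA.eigenvectorBasis j).ofLp)
      = if i = j then hA.eigenvalues i else 0 := by
  rw [hA.mulVec_eigenvectorBasis, dotProduct_smul]
  have horth := orthonormal_iff_ite.mp hA.eigenvectorBasis.orthonormal j i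
  rw [EuclideanSpace.inner_eq_star_dotProduct, star_trivial] at horth
  rcases eq_or_ne i j with rfl | hij
  · simp [horth]
  · simp [horth, hij, hij.symm]

theorem IsHermitian.sigPos_toQuadraticForm' (hA : A.IsHermitian) :
    sigPos A.toQuadraticForm' = {i | 0 < hA.eigenvalues i}.ncard := by
  let v := hA.eigenvectorBasis.toBasis.map (WithLp.linearEquiv 2 ℝ (ι → ℝ))
  have hv (i j : ι) : v i ⬝ᵥ (A *ᵥ v j) = if i = j then hA.eigenvalues i else 0 := by
    simpa [v] using hA.dotProduct_mulVec_eigenvectorBasis i j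
  have hortho : (associated (R := ℝ) A.toQuadraticForm').IsOrthoᵢ v := fun i j hij => by
    change associated _ (v i) (v j) = 0
    rw [associated_isOrtho, hA.isOrtho_toQuadraticForm'_iff, hv, if_neg hij.symm]
  have hweights : (fun i => A.toQuadraticForm' (v i)) = hA.eigenvalues := by
    ext i
    rw [toQuadraticForm'_apply, hv, if_pos rfl]
  refine QuadraticForm.sigPos_of_equiv_weightedSumSquares ?_
  rw [← hweights, ← basisRepr_eq_of_iIsOrtho _ v hortho]
  exact ⟨isometryEquivBasisRepr _ v⟩

end Inertia

lemma dotProduct_mulVec_neg_smul_sub_smul_vecMulVec (c t : ℝ) (w x : ι → ℝ) :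
    x ⬝ᵥ (-(c • A - t • vecMulVec w w) *ᵥ x) = t * (x ⬝ᵥ w) ^ 2 - c * (x ⬝ᵥ (A *ᵥ x)) := by
  rw [neg_mulVec, sub_mulVec, smul_mulVec, smul_mulVec, vecMulVec_mulVec, dotProduct_neg,
    dotProduct_sub, dotProduct_smul, dotProduct_smul, dotProduct_smul, dotProduct_comm w x,
    smul_eq_mul, smul_eq_mul, op_smul_eq_mul]
  ring

lemma IsHermitian.neg_smul_sub_smul_vecMulVec (hA : A.IsHermitian) (c t : ℝ) (w : ι → ℝ) :
    (-(c • A - t • vecMulVec w w)).IsHermitian := by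
  have hw : (vecMulVec w w).IsHermitian := by
    simpa using (posSemidef_vecMulVec_self_star w).isHermitian
  exact ((hA.smul (.all c)).sub (hw.smul (.all t))).neg

lemma IsHermitian.mul_dotProduct_mulVec_le_sq (hA : A.IsHermitian) {a : ι → ℝ}
    (ha : 0 < a ⬝ᵥ (A *ᵥ a)) (hnonpos : ∀ b, b ⬝ᵥ (A *ᵥ a) = 0 → b ⬝ᵥ (A *ᵥ b) ≤ 0)
    (x : ι → ℝ) : (a ⬝ᵥ (A *ᵥ a)) * (x ⬝ᵥ (A *ᵥ x)) ≤ (x ⬝ᵥ (A *ᵥ a)) ^ 2 := by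
  set α := a ⬝ᵥ (A *ᵥ a)
  set s := x ⬝ᵥ (A *ᵥ a)
  have hax : a ⬝ᵥ (A *ᵥ x) = s := hA.dotProduct_mulVec_comm a x
  have hortho : (α • x - s • a) ⬝ᵥ (A *ᵥ a) = 0 := by
    simp only [sub_dotProduct, smul_dotProduct, smul_eq_mul]
    ring
  have hexpand : (α • x - s • a) ⬝ᵥ (A *ᵥ (α • x - s • a))
      = α * (α * (x ⬝ᵥ (A *ᵥ x)) - s ^ 2) := by
    simp only [mulVec_sub, mulVec_smul, sub_dotProduct, dotProduct_sub, smul_dotProduct,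
      dotProduct_smul, smul_eq_mul, hax]
    ring
  have := hnonpos _ hortho
  rw [hexpand] at this
  nlinarith

theorem IsHermitian.forall_posSemidef_neg_smul_sub_smul_vecMulVec_iff (hA : A.IsHermitian)
    {a : ι → ℝ} (ha : 0 < a ⬝ᵥ (A *ᵥ a)) :
    (∀ t : ℝ, 1 ≤ t →
        (-((a ⬝ᵥ (A *ᵥ a)) • A - t • vecMulVec (A *ᵥ a) (A *ᵥ a))).PosSemidef) ↔
      ∀ b : ι → ℝ, b ⬝ᵥ (A *ᵥ a) = 0 → b ⬝ᵥ (A *ᵥ b) ≤ 0 := by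
  constructor
  · intro hpsd b hb
    have := (hpsd 1 le_rfl).dotProduct_mulVec_nonneg b
    rw [star_trivial, dotProduct_mulVec_neg_smul_sub_smul_vecMulVec, hb] at this
    nlinarith
  · intro hnonpos t ht
    refine .of_dotProduct_mulVec_nonneg (hA.neg_smul_sub_smul_vecMulVec _ _ _) fun x => ?_
    rw [star_trivial, dotProduct_mulVec_neg_smul_sub_smul_vecMulVec]
    nlinarith [hA.mul_dotProduct_mulVec_le_sq ha hnonpos x, sq_nonneg (x ⬝ᵥ (A *ᵥ a))]

end Matrix

lemma posEigCount_eq_sigPos {n : ℕ} {Q : Matrix (Fin n) (Fin n) ℝ} (hQ : Q.IsHermitian) :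
    posEigCount Q = sigPos Q.toQuadraticForm' := by
  rw [posEigCount, dif_pos hQ, hQ.sigPos_toQuadraticForm', Set.ncard_eq_toFinset_card',
    Set.toFinset_ofPred]

/-- Let `Q` be a real symmetric `n × n` matrix and `a ∈ ℝⁿ` with
`aᵀQa > 0`. Then the following are equivalent: (a) `Q` has exactly one positive eigenvalue;
(b) for every `t ≥ 1` the matrix `(aᵀQa)·Q − t·(Qa)(Qa)ᵀ` is negative semidefinite;
(c) `x ↦ xᵀQx` is negative semidefinite on the hyperplane `{b : bᵀQa = 0}`. -/
theorem stmt8 {n : ℕ} (Q : Matrix (Fin n) (Fin n) ℝ) (hsymm : Q.IsHermitian)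
    (a : Fin n → ℝ) (ha : 0 < a ⬝ᵥ (Q *ᵥ a)) :
    (posEigCount Q = 1 ↔
      ∀ t : ℝ, 1 ≤ t →
        (-((a ⬝ᵥ (Q *ᵥ a)) • Q - t • vecMulVec (Q *ᵥ a) (Q *ᵥ a))).PosSemidef) ∧
    ((∀ t : ℝ, 1 ≤ t →
        (-((a ⬝ᵥ (Q *ᵥ a)) • Q - t • vecMulVec (Q *ᵥ a) (Q *ᵥ a))).PosSemidef) ↔
      ∀ b : Fin n → ℝ, b ⬝ᵥ (Q *ᵥ a) = 0 → b ⬝ᵥ (Q *ᵥ b) ≤ 0) := by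
  have hbc := hsymm.forall_posSemidef_neg_smul_sub_smul_vecMulVec_iff ha
  have hac : posEigCount Q = 1 ↔ ∀ b, b ⬝ᵥ (Q *ᵥ a) = 0 → b ⬝ᵥ (Q *ᵥ b) ≤ 0 := by
    rw [posEigCount_eq_sigPos hsymm,
      QuadraticForm.sigPos_eq_one_iff (by rwa [toQuadraticForm'_apply])]
    simp only [hsymm.isOrtho_toQuadraticForm'_iff, toQuadraticForm'_apply]
  exact ⟨hac.trans hbc.symm, hbc⟩
end

section
/- Let f be a real homogeneous polynomial of degree d ≥ 2 in n variables and K ⊆ ℝ^n a proper convex cone. Suppose f(a) > 0 for all a in the interior of K, and for a ∈ ℝ^n let Q_a = H_f(a) denote the Hessian matrix of f evaluated at a. Then the following are equivalent: (a) f is log-concave on K; (b) Q_a has exactly one positive eigenvalue (counted with multiplicity) for every a in the interior of K; (c) for every a in the interior of K, the quadratic form x ↦ xᵀQ_a x is negative semidefinite on the hyperplane {x : xᵀ(Q_a a) = 0}; (d) for every a in the interior of K, the matrix (aᵀQ_a a)·Q_a − (Q_a a)(Q_a a)ᵀ is negative semidefinite. -/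
/-!
Everything happens at a single point `a` of the interior of `K`. Write `H = H_f(a)`. Euler's
identity gives `H a = (d - 1) ∇f(a)` and `aᵀ H a = d (d - 1) f(a) > 0`. Both (a) and (d) then say
that a reversed Cauchy–Schwarz inequality `s · xᵀ H x ≤ (xᵀ H a)²` holds for some `0 < s ≤ aᵀ H a`
(`s = (d - 1)² f(a)` for (a), `s = aᵀ H a` for (d)); splitting `x = y + c a` with `yᵀ H a = 0`
shows that this is equivalent to (c). In an orthonormal eigenbasis of `H`, (c) is equivalent to (b):
Cauchy–Schwarz on the nonpositive eigenspaces gives one direction, and for two positive eigenvalues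
some vector in the span of their eigenvectors is orthogonal to `H a` with `xᵀ H x > 0`.
-/

open Matrix

open MvPolynomial

/-- Directional derivative `D_a f = Σᵢ aᵢ ∂f/∂xᵢ` of a polynomial. -/
noncomputable def dirDeriv {n : ℕ} (a : Fin n → ℝ) (f : MvPolynomial (Fin n) ℝ) :
    MvPolynomial (Fin n) ℝ :=
  ∑ i, a i • pderiv i f

/-- The gradient of a polynomial at a point. -/
noncomputable def polyGrad {n : ℕ} (f : MvPolynomial (Fin n) ℝ) (x : Fin n → ℝ) :
    Fin n → ℝ :=
  fun i => eval x (pderiv i f)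

/-- The Hessian matrix of a polynomial at a point. -/
noncomputable def polyHess {n : ℕ} (f : MvPolynomial (Fin n) ℝ) (x : Fin n → ℝ) :
    Matrix (Fin n) (Fin n) ℝ :=
  Matrix.of fun i j => eval x (pderiv i (pderiv j f))

/-- The Hessian of `log f` at `x`, namely `(f(x)·H_f(x) − ∇f(x)∇f(x)ᵀ)/f(x)²`. -/
noncomputable def logHess {n : ℕ} (f : MvPolynomial (Fin n) ℝ) (x : Fin n → ℝ) :
    Matrix (Fin n) (Fin n) ℝ :=
  ((eval x f) ^ 2)⁻¹ • ((eval x f) • polyHess f x -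
    Matrix.vecMulVec (polyGrad f x) (polyGrad f x))

/-- `f` is log-concave at `x`: either `f = 0`, or `f(x) > 0` and the Hessian of `log f`
at `x` is negative semidefinite. -/
def LogConcaveAt {n : ℕ} (f : MvPolynomial (Fin n) ℝ) (x : Fin n → ℝ) : Prop :=
  f = 0 ∨ (0 < eval x f ∧ (-(logHess f x)).PosSemidef)

/-- `f` is strictly log-concave at `x`: `f(x) > 0` and the Hessian of `log f` at `x` is
negative definite. -/
def StrictLogConcaveAt {n : ℕ} (f : MvPolynomial (Fin n) ℝ) (x : Fin n → ℝ) : Prop :=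
  0 < eval x f ∧ (-(logHess f x)).PosDef

open Finset

section DiagonalForm
variable {ι : Type*} [Fintype ι] {μ u : ι → ℝ}

theorem sum_mul_mul_nonpos_of_orthogonal {k : ι} (hk : ∀ i ≠ k, μ i ≤ 0)
    (hu : 0 < ∑ i, μ i * u i * u i) {w : ι → ℝ} (hw : ∑ i, μ i * w i * u i = 0) :
    ∑ i, μ i * w i * w i ≤ 0 := by
  classical
  set s := univ.erase k
  have hs : ∀ i ∈ s, μ i ≤ 0 := fun i hi => hk i (ne_of_mem_erase hi)
  rw [← add_sum_erase _ _ (mem_univ k)] at hu hw ⊢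
  have hA : ∑ i ∈ s, μ i * u i * u i ≤ 0 :=
    sum_nonpos fun i hi => by nlinarith [hs i hi, mul_self_nonneg (u i)]
  have hC : ∑ i ∈ s, μ i * w i * w i ≤ 0 :=
    sum_nonpos fun i hi => by nlinarith [hs i hi, mul_self_nonneg (w i)]
  -- Cauchy–Schwarz for the negative semidefinite form `∑_{i ≠ k} μ i x i y i`
  have hCS : (∑ i ∈ s, μ i * w i * u i) ^ 2 ≤
      (∑ i ∈ s, μ i * u i * u i) * ∑ i ∈ s, μ i * w i * w i := by
    have := sum_sq_le_sum_mul_sum_of_sq_le_mul s (r := fun i => μ i * w i * u i)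
      (f := fun i => -(μ i * u i * u i)) (g := fun i => -(μ i * w i * w i))
      (fun i hi => by nlinarith [hs i hi, mul_self_nonneg (u i)])
      (fun i hi => by nlinarith [hs i hi, mul_self_nonneg (w i)]) (fun i _ => by ring_nf; rfl)
    simpa only [sum_neg_distrib, neg_mul_neg] using this
  have hkk : (μ k * u k * u k) * (μ k * w k * w k) = (μ k * w k * u k) ^ 2 := by ring
  generalize μ k * u k * u k = p, μ k * w k * w k = q, μ k * w k * u k = r at *
  generalize ∑ i ∈ s, μ i * u i * u i = A, ∑ i ∈ s, μ i * w i * w i = C,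
    ∑ i ∈ s, μ i * w i * u i = R at *
  obtain rfl : r = -R := by linarith
  by_contra! hq
  nlinarith [mul_le_mul_of_nonneg_right (show -A ≤ p by linarith) (show 0 ≤ -C by linarith),
    mul_lt_mul_of_pos_left (show -C < q by linarith) (show 0 < p by linarith)]

theorem card_filter_pos_eq_one_of_orthogonal (hu : 0 < ∑ i, μ i * u i * u i)
    (h : ∀ w : ι → ℝ, ∑ i, μ i * w i * u i = 0 → ∑ i, μ i * w i * w i ≤ 0) :
    #{i | 0 < μ i} = 1 := by
  classical
  have hne : ({i | 0 < μ i} : Finset ι).Nonempty := by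
    by_contra! hnone
    have hμ : ∀ i, μ i ≤ 0 := fun i => by
      simpa using filter_eq_empty_iff.mp hnone (mem_univ i)
    exact hu.not_ge (sum_nonpos fun i _ => by nlinarith [hμ i, mul_self_nonneg (u i)])
  refine le_antisymm (card_le_one.mpr fun i hi j hj => ?_) hne.card_pos
  simp only [mem_filter, mem_univ, true_and] at hi hj
  by_contra hij
  by_cases hui : u i = 0
  · have := h (Pi.single i 1) (by simp [Pi.single_apply, hui])
    simp [Pi.single_apply] at this
    linarith
  · -- a vector of `span {e i, e j}`, where the form is positive definite, orthogonal to `u`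
    set w : ι → ℝ := fun l => if l = i then μ j * u j else if l = j then -(μ i * u i) else 0
    have hsum : ∀ g : ι → ℝ → ℝ, (∀ l, g l 0 = 0) →
        ∑ l, g l (w l) = g i (μ j * u j) + g j (-(μ i * u i)) := fun g hg => by
      rw [Fintype.sum_eq_add i j hij fun l hl => by simp [w, hl.1, hl.2, hg]]
      simp [w, Ne.symm hij]
    have hw := h w (by rw [hsum (fun l x => μ l * x * u l) (by simp)]; ring)
    rw [hsum (fun l x => μ l * x * x) (by simp)] at hw
    have : 0 < μ j * (μ i * u i) ^ 2 := by positivity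
    nlinarith [mul_self_nonneg (μ j * u j)]

end DiagonalForm

namespace Matrix

theorem posSemidef_smul_iff {n : Type*} {c : ℝ} (hc : 0 < c) {M : Matrix n n ℝ} :
    (c • M).PosSemidef ↔ M.PosSemidef :=
  ⟨fun h => by simpa [smul_smul, hc.ne'] using h.smul (inv_nonneg.mpr hc.le),
    fun h => h.smul hc.le⟩

variable {n : Type*} [Fintype n]

namespace IsHermitian

variable {Q : Matrix n n ℝ} (hQ : Q.IsHermitian)
include hQ

theorem dotProduct_mulVec_comm_s9 (x y : n → ℝ) : x ⬝ᵥ (Q *ᵥ y) = y ⬝ᵥ (Q *ᵥ x) := by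
  rw [← dotProduct_transpose_mulVec, ← conjTranspose_eq_transpose_of_trivial, hQ.eq]

theorem neg_smul_sub_vecMulVec_posSemidef_iff (s : ℝ) (b : n → ℝ) :
    (-(s • Q - vecMulVec b b)).PosSemidef ↔ ∀ x, s * (x ⬝ᵥ (Q *ᵥ x)) ≤ (x ⬝ᵥ b) ^ 2 := by
  have hb : (vecMulVec b b).IsHermitian := by
    simpa using (posSemidef_vecMulVec_self_star b).isHermitian
  have hquad : ∀ x, x ⬝ᵥ (-(s • Q - vecMulVec b b) *ᵥ x) = (x ⬝ᵥ b) ^ 2 - s * (x ⬝ᵥ (Q *ᵥ x)) := by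
    intro x
    simp only [neg_mulVec, sub_mulVec, smul_mulVec, vecMulVec_mulVec, dotProduct_neg,
      dotProduct_sub, dotProduct_smul, smul_eq_mul, op_smul_eq_smul, dotProduct_comm b x]
    ring
  simp only [posSemidef_iff_dotProduct_mulVec, star_trivial, hquad, sub_nonneg,
    and_iff_right (((hQ.smul (IsSelfAdjoint.all s)).sub hb).neg)]

theorem forall_mul_le_sq_iff {a : n → ℝ} {s : ℝ} (hs : 0 < s) (hst : s ≤ a ⬝ᵥ (Q *ᵥ a)) :
    (∀ x, s * (x ⬝ᵥ (Q *ᵥ x)) ≤ (x ⬝ᵥ (Q *ᵥ a)) ^ 2) ↔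
      ∀ x, x ⬝ᵥ (Q *ᵥ a) = 0 → x ⬝ᵥ (Q *ᵥ x) ≤ 0 := by
  refine ⟨fun h x hx => by nlinarith [h x], fun h x => ?_⟩
  have ht : 0 < a ⬝ᵥ (Q *ᵥ a) := hs.trans_le hst
  -- split `x = y + c • a` with `y` orthogonal to `Q a`
  obtain ⟨c, hct⟩ : ∃ c, c * (a ⬝ᵥ (Q *ᵥ a)) = x ⬝ᵥ (Q *ᵥ a) := ⟨_, div_mul_cancel₀ _ ht.ne'⟩
  have hy : (x - c • a) ⬝ᵥ (Q *ᵥ a) = 0 := by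
    rw [sub_dotProduct, smul_dotProduct, smul_eq_mul, hct, sub_self]
  have hx : x ⬝ᵥ (Q *ᵥ x) = (x - c • a) ⬝ᵥ (Q *ᵥ (x - c • a)) + c ^ 2 * (a ⬝ᵥ (Q *ᵥ a)) := by
    simp only [mulVec_sub, mulVec_smul, dotProduct_sub, sub_dotProduct, dotProduct_smul,
      smul_dotProduct, smul_eq_mul, hQ.dotProduct_mulVec_comm_s9 a x] at hy ⊢
    linear_combination 2 * c * hy
  have key : (a ⬝ᵥ (Q *ᵥ a)) * (x ⬝ᵥ (Q *ᵥ x)) ≤ (x ⬝ᵥ (Q *ᵥ a)) ^ 2 := by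
    rw [hx, ← hct]
    nlinarith [mul_nonpos_of_nonneg_of_nonpos ht.le (h _ hy)]
  rcases le_or_gt (x ⬝ᵥ (Q *ᵥ x)) 0 with hneg | hpos
  · nlinarith [sq_nonneg (x ⬝ᵥ (Q *ᵥ a))]
  · nlinarith [mul_le_mul_of_nonneg_right hst hpos.le]

variable [DecidableEq n]

local notation "U" => (hQ.eigenvectorUnitary : Matrix n n ℝ)

theorem dotProduct_mulVec_eq_sum_eigenvalues (x y : n → ℝ) :
    x ⬝ᵥ (Q *ᵥ y) = ∑ i, hQ.eigenvalues i * (star U *ᵥ x) i * (star U *ᵥ y) i := by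
  conv_lhs => rw [hQ.spectral_theorem, Unitary.conjStarAlgAut_apply]
  rw [← mulVec_mulVec, ← mulVec_mulVec, dotProduct_mulVec, ← mulVec_transpose,
    star_eq_conjTranspose, conjTranspose_eq_transpose_of_trivial, dotProduct]
  simp only [mulVec_diagonal, Function.comp_apply, RCLike.ofReal_real_eq_id, id]
  exact sum_congr rfl fun i _ => by ring

theorem surjective_star_eigenvectorUnitary_mulVec : Function.Surjective (star U *ᵥ ·) :=
  fun w => ⟨U *ᵥ w, by dsimp only; rw [mulVec_mulVec, Unitary.coe_star_mul_self, one_mulVec]⟩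

end IsHermitian

theorem posEigCount_eq_one_iff {m : ℕ} {Q : Matrix (Fin m) (Fin m) ℝ} (hQ : Q.IsHermitian)
    {a : Fin m → ℝ} (ha : 0 < a ⬝ᵥ (Q *ᵥ a)) :
    posEigCount Q = 1 ↔ ∀ x, x ⬝ᵥ (Q *ᵥ a) = 0 → x ⬝ᵥ (Q *ᵥ x) ≤ 0 := by
  simp only [posEigCount, dif_pos hQ, hQ.dotProduct_mulVec_eq_sum_eigenvalues] at ha ⊢
  constructor
  · intro h x
    obtain ⟨k, hk⟩ := card_eq_one.mp h
    refine sum_mul_mul_nonpos_of_orthogonal (k := k) (fun i hik => ?_) ha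
    by_contra! hi
    exact hik (mem_singleton.mp (hk ▸ mem_filter.mpr ⟨mem_univ i, hi⟩))
  · refine fun h => card_filter_pos_eq_one_of_orthogonal ha fun w => ?_
    obtain ⟨x, rfl⟩ := hQ.surjective_star_eigenvectorUnitary_mulVec w
    exact h x

end Matrix

theorem MvPolynomial.pderiv_pderiv_comm {R σ : Type*} [CommRing R] (i j : σ)
    (f : MvPolynomial σ R) : pderiv i (pderiv j f) = pderiv j (pderiv i f) := by
  classical
  -- the commutator of two derivations is a derivation, and this one kills every variable
  have hcomm : ⁅pderiv (R := R) i, pderiv j⁆ = 0 := derivation_ext fun k => by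
    rw [Derivation.commutator_apply, pderiv_X, pderiv_X]
    simp only [Pi.single_apply]
    split_ifs <;> simp
  have h := congr($hcomm f)
  rwa [Derivation.commutator_apply, Derivation.zero_apply, sub_eq_zero] at h

theorem polyHess_isHermitian {n : ℕ} (f : MvPolynomial (Fin n) ℝ) (a : Fin n → ℝ) :
    (polyHess f a).IsHermitian :=
  Matrix.IsHermitian.ext fun i j => by simp [polyHess, pderiv_pderiv_comm i j]

namespace MvPolynomial.IsHomogeneous

variable {n d : ℕ} {f : MvPolynomial (Fin n) ℝ} (hf : f.IsHomogeneous d) (a : Fin n → ℝ)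
include hf

theorem dotProduct_polyGrad : a ⬝ᵥ polyGrad f a = d * eval a f := by
  simpa [dotProduct, polyGrad] using congr(eval a $(hf.sum_X_mul_pderiv))

theorem polyHess_mulVec_self : polyHess f a *ᵥ a = ((d - 1 : ℕ) : ℝ) • polyGrad f a := by
  ext i
  rw [Pi.smul_apply, smul_eq_mul, polyGrad, ← hf.pderiv.dotProduct_polyGrad a]
  simp only [mulVec, dotProduct, polyHess, of_apply, polyGrad, pderiv_pderiv_comm i]
  exact sum_congr rfl fun j _ => mul_comm _ _

theorem dotProduct_polyHess_mulVec_self :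
    a ⬝ᵥ (polyHess f a *ᵥ a) = d * (d - 1 : ℕ) * eval a f := by
  rw [hf.polyHess_mulVec_self, dotProduct_smul, hf.dotProduct_polyGrad, smul_eq_mul]
  ring

end MvPolynomial.IsHomogeneous

section LogConcavity

variable {n d : ℕ} {f : MvPolynomial (Fin n) ℝ} {a : Fin n → ℝ}

theorem logConcaveAt_iff_forall_mul_le_sq (hfa : 0 < eval a f) :
    LogConcaveAt f a ↔
      ∀ x, eval a f * (x ⬝ᵥ (polyHess f a *ᵥ x)) ≤ (x ⬝ᵥ polyGrad f a) ^ 2 := by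
  have hf : f ≠ 0 := by rintro rfl; simp at hfa
  rw [LogConcaveAt, or_iff_right hf, and_iff_right hfa, logHess, ← smul_neg,
    posSemidef_smul_iff (by positivity),
    (polyHess_isHermitian f a).neg_smul_sub_vecMulVec_posSemidef_iff]

namespace MvPolynomial.IsHomogeneous

variable (hd : 2 ≤ d) (hf : f.IsHomogeneous d) (hfa : 0 < eval a f)
include hd hf hfa

theorem dotProduct_polyHess_mulVec_self_pos : 0 < a ⬝ᵥ (polyHess f a *ᵥ a) := by
  have : (0 : ℝ) < (d - 1 : ℕ) := by exact_mod_cast (by omega : 0 < d - 1)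
  rw [hf.dotProduct_polyHess_mulVec_self]
  positivity

theorem logConcaveAt_iff :
    LogConcaveAt f a ↔
      ∀ x, x ⬝ᵥ (polyHess f a *ᵥ a) = 0 → x ⬝ᵥ (polyHess f a *ᵥ x) ≤ 0 := by
  have he : (0 : ℝ) < (d - 1 : ℕ) := by exact_mod_cast (by omega : 0 < d - 1)
  have hed : ((d - 1 : ℕ) : ℝ) ≤ d := by exact_mod_cast Nat.sub_le d 1
  -- Euler's identity `H a = (d - 1) ∇f(a)` turns the log-concavity inequality into the
  -- reversed Cauchy–Schwarz inequality for `H` with constant `(d - 1)² f(a) ≤ aᵀ H a`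
  rw [logConcaveAt_iff_forall_mul_le_sq hfa,
    ← (polyHess_isHermitian f a).forall_mul_le_sq_iff (s := ((d - 1 : ℕ) : ℝ) ^ 2 * eval a f)
      (by positivity) (by rw [hf.dotProduct_polyHess_mulVec_self, sq]; gcongr)]
  refine forall_congr' fun x => ?_
  rw [hf.polyHess_mulVec_self, dotProduct_smul, smul_eq_mul, mul_pow, mul_assoc,
    mul_le_mul_iff_right₀ (by positivity)]

theorem posEigCount_polyHess_eq_one_iff :
    posEigCount (polyHess f a) = 1 ↔
      ∀ x, x ⬝ᵥ (polyHess f a *ᵥ a) = 0 → x ⬝ᵥ (polyHess f a *ᵥ x) ≤ 0 :=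
  posEigCount_eq_one_iff (polyHess_isHermitian f a)
    (dotProduct_polyHess_mulVec_self_pos hd hf hfa)

theorem neg_smul_polyHess_sub_vecMulVec_posSemidef_iff :
    (-((a ⬝ᵥ (polyHess f a *ᵥ a)) • polyHess f a -
        vecMulVec (polyHess f a *ᵥ a) (polyHess f a *ᵥ a))).PosSemidef ↔
      ∀ x, x ⬝ᵥ (polyHess f a *ᵥ a) = 0 → x ⬝ᵥ (polyHess f a *ᵥ x) ≤ 0 := by
  have hQ := polyHess_isHermitian f a
  rw [hQ.neg_smul_sub_vecMulVec_posSemidef_iff,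
    hQ.forall_mul_le_sq_iff (dotProduct_polyHess_mulVec_self_pos hd hf hfa) le_rfl]

end MvPolynomial.IsHomogeneous

end LogConcavity

theorem stmt9_general {n d : ℕ} (hd : 2 ≤ d) (f : MvPolynomial (Fin n) ℝ)
    (hf : f.IsHomogeneous d) (K : Set (Fin n → ℝ))
    (hpos : ∀ a ∈ interior K, 0 < eval a f) :
    List.TFAE
      [∀ a ∈ interior K, LogConcaveAt f a,
       ∀ a ∈ interior K, posEigCount (polyHess f a) = 1,
       ∀ a ∈ interior K, ∀ x : Fin n → ℝ,
         x ⬝ᵥ (polyHess f a *ᵥ a) = 0 → x ⬝ᵥ (polyHess f a *ᵥ x) ≤ 0,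
       ∀ a ∈ interior K,
         (-((a ⬝ᵥ (polyHess f a *ᵥ a)) • polyHess f a -
            vecMulVec (polyHess f a *ᵥ a) (polyHess f a *ᵥ a))).PosSemidef] := by
  tfae_have 1 ↔ 3 := forall₂_congr fun a ha => hf.logConcaveAt_iff hd (hpos a ha)
  tfae_have 2 ↔ 3 := forall₂_congr fun a ha => hf.posEigCount_polyHess_eq_one_iff hd (hpos a ha)
  tfae_have 4 ↔ 3 := forall₂_congr fun a ha =>
    hf.neg_smul_polyHess_sub_vecMulVec_posSemidef_iff hd (hpos a ha)
  tfae_finish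

/-- Equivalent characterizations of log-concavity of a form of degree
`d ≥ 2` on a proper convex cone `K`, assuming `f > 0` on the interior of `K`. -/
theorem stmt9 {n d : ℕ} (hd : 2 ≤ d) (f : MvPolynomial (Fin n) ℝ)
    (hf : f.IsHomogeneous d) (K : Set (Fin n → ℝ)) (hK : IsProperCone K)
    (hpos : ∀ a ∈ interior K, 0 < eval a f) :
    List.TFAE
      [∀ a ∈ interior K, LogConcaveAt f a,
       ∀ a ∈ interior K, posEigCount (polyHess f a) = 1,
       ∀ a ∈ interior K, ∀ x : Fin n → ℝ,
         x ⬝ᵥ (polyHess f a *ᵥ a) = 0 → x ⬝ᵥ (polyHess f a *ᵥ x) ≤ 0,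
       ∀ a ∈ interior K,
         (-((a ⬝ᵥ (polyHess f a *ᵥ a)) • polyHess f a -
            vecMulVec (polyHess f a *ᵥ a) (polyHess f a *ᵥ a))).PosSemidef] :=
  stmt9_general hd f hf K hpos
end

section
/- Let f be a real homogeneous polynomial of degree d ≥ 2 in n variables and K ⊆ ℝ^n a proper convex cone. Suppose f(a) > 0 for all nonzero a ∈ K, and for a ∈ ℝ^n let Q_a = H_f(a) denote the Hessian matrix of f evaluated at a. Then the following are equivalent: (a) f is strictly log-concave at every nonzero point of K; (b) for every nonzero a ∈ K, the quadratic form x ↦ xᵀQ_a x is negative definite on the hyperplane {x : xᵀ(Q_a a) = 0}; (c) for every nonzero a ∈ K, the matrix Q_a is nonsingular and has exactly one positive eigenvalue (counted with multiplicity). -/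
open Matrix

open MvPolynomial

/-!
Write `F`, `g`, `H` for the value, gradient and Hessian of `f` at `a`. Euler's identities give
`H a = (d - 1) g` and `a ⬝ g = d F`, so `aᵀ H a = d (d - 1) F > 0`. The Hessian of `-log f` is
`(g gᵀ - F H) / F²`; splitting `x = y + t a` with `yᵀ H a = 0` shows that it is positive definite
exactly when `H` is negative definite on the hyperplane `{x | xᵀ H a = 0}`.

In an orthonormal eigenbasis of `H`, two nonnegative eigenvalues would span a plane on which `H`
is positive semidefinite, and this plane meets the hyperplane. Conversely, if only one eigenvalue
is positive and none vanishes, `H` is negative definite on the coordinate hyperplane of that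
eigenvector, hence on the `H`-orthogonal complement of any vector on which it is positive.
-/

lemma exists_mul_add_mul_eq_zero {R : Type*} [CommRing R] [Nontrivial R] (p q : R) :
    ∃ s t : R, (s ≠ 0 ∨ t ≠ 0) ∧ s * p + t * q = 0 := by
  rcases eq_or_ne q 0 with rfl | hq
  · exact ⟨0, 1, by simp, by simp⟩
  · exact ⟨q, -p, .inl hq, by ring⟩

lemma ne_zero_and_card_pos_eq_one_iff {ι : Type*} [Fintype ι] (μ : ι → ℝ) :
    ((∀ i, μ i ≠ 0) ∧ (Finset.univ.filter fun i => 0 < μ i).card = 1) ↔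
      ∃ k, 0 < μ k ∧ ∀ i ≠ k, μ i < 0 := by
  simp only [Finset.card_eq_one, Finset.eq_singleton_iff_unique_mem, Finset.mem_filter,
    Finset.mem_univ, true_and]
  constructor
  · rintro ⟨hne, k, hk, huniq⟩
    exact ⟨k, hk, fun i hi => (hne i).lt_of_le (not_lt.1 fun h => hi (huniq i h))⟩
  · rintro ⟨k, hk, hneg⟩
    refine ⟨fun i => ?_, k, hk, fun i hi => by_contra fun h => (hneg i h).not_gt hi⟩
    rcases eq_or_ne i k with rfl | h
    · exact hk.ne'
    · exact (hneg i h).ne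

namespace Matrix

variable {ι : Type*} [Fintype ι]

def IsNegDefOnOrthogonal (Q : Matrix ι ι ℝ) (a : ι → ℝ) : Prop :=
  ∀ x, x ≠ 0 → x ⬝ᵥ (Q *ᵥ a) = 0 → x ⬝ᵥ (Q *ᵥ x) < 0

lemma IsSymm.dotProduct_mulVec_comm {Q : Matrix ι ι ℝ} (hQ : Q.IsSymm) (x y : ι → ℝ) :
    x ⬝ᵥ (Q *ᵥ y) = y ⬝ᵥ (Q *ᵥ x) := by
  rw [dotProduct_mulVec, ← hQ.eq, vecMul_transpose, dotProduct_comm, hQ.eq]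

lemma IsSymm.add_smul_dotProduct_mulVec {Q : Matrix ι ι ℝ} (hQ : Q.IsSymm)
    (y b : ι → ℝ) (t : ℝ) :
    (y + t • b) ⬝ᵥ (Q *ᵥ (y + t • b)) =
      y ⬝ᵥ (Q *ᵥ y) + 2 * t * (y ⬝ᵥ (Q *ᵥ b)) + t ^ 2 * (b ⬝ᵥ (Q *ᵥ b)) := by
  simp only [mulVec_add, mulVec_smul, dotProduct_add, add_dotProduct, dotProduct_smul,
    smul_dotProduct, smul_eq_mul, hQ.dotProduct_mulVec_comm b y]
  ring

lemma exists_eq_add_smul_of_dotProduct_ne_zero {b w : ι → ℝ} (hb : b ⬝ᵥ w ≠ 0)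
    (x : ι → ℝ) : ∃ y : ι → ℝ, ∃ t : ℝ, x = y + t • b ∧ y ⬝ᵥ w = 0 := by
  refine ⟨x - (x ⬝ᵥ w / b ⬝ᵥ w) • b, x ⬝ᵥ w / b ⬝ᵥ w, by abel, ?_⟩
  rw [sub_dotProduct, smul_dotProduct, smul_eq_mul, div_mul_cancel₀ _ hb, sub_self]

/-- Split `x = y + t • b` with `y` in the hyperplane; then `xᵀ Q x = yᵀ Q y - t² bᵀ Q b`. -/
lemma isNegDefOnOrthogonal_of_isNegDefOn_hyperplane {Q : Matrix ι ι ℝ} (hQ : Q.IsSymm)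
    {u b : ι → ℝ} (hneg : ∀ y, y ≠ 0 → y ⬝ᵥ u = 0 → y ⬝ᵥ (Q *ᵥ y) < 0)
    (hb : 0 < b ⬝ᵥ (Q *ᵥ b)) : IsNegDefOnOrthogonal Q b := by
  have hbu : b ⬝ᵥ u ≠ 0 := by
    intro hbu
    rcases eq_or_ne b 0 with rfl | hb0
    · simp at hb
    · exact (hneg b hb0 hbu).not_gt hb
  intro x hx hxb
  obtain ⟨y, t, rfl, hyu⟩ := exists_eq_add_smul_of_dotProduct_ne_zero hbu x
  have hyb : y ⬝ᵥ (Q *ᵥ b) = -t * (b ⬝ᵥ (Q *ᵥ b)) := by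
    simp only [add_dotProduct, smul_dotProduct, smul_eq_mul] at hxb
    linarith
  rw [hQ.add_smul_dotProduct_mulVec, hyb]
  rcases eq_or_ne y 0 with rfl | hy
  · have ht : t ≠ 0 := by rintro rfl; simp at hx
    simp only [zero_dotProduct, zero_add]
    nlinarith [sq_pos_of_ne_zero ht]
  · nlinarith [hneg y hy hyu, sq_nonneg t]

lemma dotProduct_transpose_mul_mul_mulVec {Q P : Matrix ι ι ℝ} (x y : ι → ℝ) :
    x ⬝ᵥ ((Pᵀ * Q * P) *ᵥ y) = (P *ᵥ x) ⬝ᵥ (Q *ᵥ (P *ᵥ y)) := by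
  rw [← mulVec_mulVec, ← mulVec_mulVec, dotProduct_mulVec, vecMul_transpose]

lemma isNegDefOnOrthogonal_transpose_mul_mul_iff [DecidableEq ι] {Q P : Matrix ι ι ℝ}
    (hP : IsUnit P) (b : ι → ℝ) :
    IsNegDefOnOrthogonal (Pᵀ * Q * P) b ↔ IsNegDefOnOrthogonal Q (P *ᵥ b) := by
  have hcongr := dotProduct_transpose_mul_mul_mulVec (Q := Q) (P := P)
  have hinj := mulVec_injective_iff_isUnit.2 hP
  constructor
  · intro h x hx hxb
    obtain ⟨y, rfl⟩ := mulVec_surjective_iff_isUnit.2 hP x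
    have hy : y ≠ 0 := by rintro rfl; simp at hx
    simpa only [hcongr] using h y hy (by rwa [hcongr])
  · intro h y hy hyb
    rw [hcongr] at hyb ⊢
    exact h _ (fun h0 => hy (hinj (by rw [h0, mulVec_zero]))) hyb

/-- The algebraic core of strict log-concavity of a form of degree `c + 1`, with `F`, `g`, `H`
its value, gradient and Hessian at `a`; `H a = c g` and `a ⬝ g = (c + 1) F` are Euler's
identities. -/
lemma IsSymm.lt_sq_iff_isNegDefOnOrthogonal {H : Matrix ι ι ℝ} (hH : H.IsSymm) {a g : ι → ℝ}
    {F c : ℝ} (hF : 0 < F) (hc : 0 < c) (hHa : H *ᵥ a = c • g) (hag : a ⬝ᵥ g = (c + 1) * F) :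
    (∀ x, x ≠ 0 → F * (x ⬝ᵥ (H *ᵥ x)) < (x ⬝ᵥ g) ^ 2) ↔ IsNegDefOnOrthogonal H a := by
  have hxHa (x : ι → ℝ) : x ⬝ᵥ (H *ᵥ a) = c * (x ⬝ᵥ g) := by
    rw [hHa, dotProduct_smul, smul_eq_mul]
  have haHa : a ⬝ᵥ (H *ᵥ a) = c * ((c + 1) * F) := by rw [hxHa, hag]
  have hg_of_orth {x : ι → ℝ} (hx : x ⬝ᵥ (H *ᵥ a) = 0) : x ⬝ᵥ g = 0 := by
    rw [hxHa] at hx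
    exact (mul_eq_zero.1 hx).resolve_left hc.ne'
  constructor
  · intro h x hx hxa
    have := h x hx
    rw [hg_of_orth hxa] at this
    nlinarith
  · intro h x hx
    obtain ⟨y, t, rfl, hy⟩ :=
      exists_eq_add_smul_of_dotProduct_ne_zero (haHa.trans_ne (by positivity)) x
    rw [hH.add_smul_dotProduct_mulVec, hy, haHa, add_dotProduct, smul_dotProduct, hg_of_orth hy,
      hag, smul_eq_mul]
    rcases eq_or_ne y 0 with rfl | hy0
    · have ht : t ≠ 0 := by rintro rfl; simp at hx
      have : 0 < t ^ 2 * (c + 1) * F ^ 2 := by positivity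
      simp only [zero_dotProduct]
      nlinarith
    · nlinarith [mul_neg_of_pos_of_neg hF (h y hy0 hy)]

section Diagonal

variable [DecidableEq ι]

lemma not_isNegDefOnOrthogonal_diagonal {μ : ι → ℝ} {j k : ι} (hjk : j ≠ k) (hj : 0 ≤ μ j)
    (hk : 0 ≤ μ k) (b : ι → ℝ) : ¬ IsNegDefOnOrthogonal (diagonal μ) b := by
  intro h
  obtain ⟨s, t, hst, hb⟩ := exists_mul_add_mul_eq_zero (μ j * b j) (μ k * b k)
  set x : ι → ℝ := Pi.single j s + Pi.single k t
  have hxj : x j = s := by simp [x, hjk]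
  have hxk : x k = t := by simp [x, hjk.symm]
  have hx : x ≠ 0 := by
    rintro hx
    rw [hx] at hxj hxk
    rcases hst with hs | ht
    · exact hs hxj.symm
    · exact ht hxk.symm
  have hxz (z : ι → ℝ) : x ⬝ᵥ (diagonal μ *ᵥ z) = s * (μ j * z j) + t * (μ k * z k) := by
    simp only [x, add_dotProduct, single_dotProduct, mulVec_diagonal]
  have := h x hx ((hxz b).trans hb)
  rw [hxz, hxj, hxk] at this
  nlinarith [sq_nonneg s, sq_nonneg t]

lemma isNegDefOnOrthogonal_diagonal_iff {μ b : ι → ℝ} (hb : 0 < b ⬝ᵥ (diagonal μ *ᵥ b)) :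
    IsNegDefOnOrthogonal (diagonal μ) b ↔ ∃ k, 0 < μ k ∧ ∀ i ≠ k, μ i < 0 := by
  have hquad (x : ι → ℝ) : x ⬝ᵥ (diagonal μ *ᵥ x) = ∑ i, μ i * x i ^ 2 := by
    simp only [dotProduct, mulVec_diagonal]
    exact Finset.sum_congr rfl fun i _ => by ring
  constructor
  · intro h
    obtain ⟨k, hk⟩ : ∃ k, 0 < μ k := by
      by_contra! hμ
      rw [hquad] at hb
      exact hb.not_ge (Finset.sum_nonpos fun i _ => mul_nonpos_of_nonpos_of_nonneg (hμ i)
        (sq_nonneg _))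
    exact ⟨k, hk, fun i hi => not_le.1 fun h0 =>
      not_isNegDefOnOrthogonal_diagonal hi h0 hk.le b h⟩
  · rintro ⟨k, -, hneg⟩
    refine isNegDefOnOrthogonal_of_isNegDefOn_hyperplane (isSymm_diagonal μ)
      (u := Pi.single k 1) (fun y hy hyk => ?_) hb
    rw [dotProduct_single, mul_one] at hyk
    have hle (i : ι) : μ i * y i ^ 2 ≤ 0 := by
      rcases eq_or_ne i k with rfl | hik
      · simp [hyk]
      · exact mul_nonpos_of_nonpos_of_nonneg (hneg i hik).le (sq_nonneg _)
    obtain ⟨i, hi⟩ := Function.ne_iff.1 hy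
    have hik : i ≠ k := by rintro rfl; exact hi hyk
    rw [hquad, ← Finset.sum_const_zero]
    exact Finset.sum_lt_sum (fun i _ => hle i) ⟨i, Finset.mem_univ _,
      mul_neg_of_neg_of_pos (hneg i hik) (sq_pos_of_ne_zero hi)⟩

end Diagonal

lemma IsHermitian.isNegDefOnOrthogonal_iff {n : ℕ} {Q : Matrix (Fin n) (Fin n) ℝ}
    (hQ : Q.IsHermitian) {a : Fin n → ℝ} (ha : 0 < a ⬝ᵥ (Q *ᵥ a)) :
    IsNegDefOnOrthogonal Q a ↔ Q.det ≠ 0 ∧ posEigCount Q = 1 := by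
  set U : Matrix (Fin n) (Fin n) ℝ := (hQ.eigenvectorUnitary : Matrix (Fin n) (Fin n) ℝ)
  have hUU : U * Uᵀ = 1 := by
    simpa [U, star_eq_conjTranspose] using Unitary.coe_mul_star_self hQ.eigenvectorUnitary
  have hD : Uᵀ * Q * U = diagonal hQ.eigenvalues := by
    simpa [U, star_eq_conjTranspose] using hQ.conjStarAlgAut_star_eigenvectorUnitary
  have hUb : U *ᵥ (Uᵀ *ᵥ a) = a := by rw [mulVec_mulVec, hUU, one_mulVec]
  have hb : 0 < (Uᵀ *ᵥ a) ⬝ᵥ (diagonal hQ.eigenvalues *ᵥ (Uᵀ *ᵥ a)) := by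
    rwa [← hD, dotProduct_transpose_mul_mul_mulVec, hUb]
  rw [← hUb, ← isNegDefOnOrthogonal_transpose_mul_mul_iff (IsUnit.of_mul_eq_one _ hUU), hD,
    isNegDefOnOrthogonal_diagonal_iff hb, hQ.det_eq_prod_eigenvalues, posEigCount, dif_pos hQ,
    ← ne_zero_and_card_pos_eq_one_iff]
  simp [Finset.prod_ne_zero_iff]

end Matrix

namespace MvPolynomial

lemma pderiv_pderiv_comm_s10 {R σ : Type*} [CommSemiring R] (i j : σ) (f : MvPolynomial σ R) :
    pderiv i (pderiv j f) = pderiv j (pderiv i f) := by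
  classical
  induction f using MvPolynomial.induction_on with
  | C a => simp
  | add p q hp hq => simp [hp, hq]
  | mul_X p k hp =>
    simp only [pderiv_mul, hp, pderiv_X, Pi.single_apply, map_add]
    split_ifs <;> simp; ring

end MvPolynomial

section Hessian

variable {n d : ℕ} {f : MvPolynomial (Fin n) ℝ}

lemma polyHess_isSymm (f : MvPolynomial (Fin n) ℝ) (a : Fin n → ℝ) : (polyHess f a).IsSymm := by
  ext i j
  simp [polyHess, pderiv_pderiv_comm_s10 i j]

lemma dotProduct_polyGrad_self (hf : f.IsHomogeneous d) (a : Fin n → ℝ) :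
    a ⬝ᵥ polyGrad f a = d * eval a f := by
  simpa [dotProduct, polyGrad] using congrArg (eval a) hf.sum_X_mul_pderiv

lemma polyHess_mulVec_self (hf : f.IsHomogeneous d) (a : Fin n → ℝ) :
    polyHess f a *ᵥ a = ((d - 1 : ℕ) : ℝ) • polyGrad f a := by
  ext i
  rw [Pi.smul_apply, smul_eq_mul, polyGrad, ← dotProduct_polyGrad_self hf.pderiv a,
    dotProduct_comm]
  simp only [mulVec, polyHess, of_apply, pderiv_pderiv_comm_s10 i]
  rfl

lemma dotProduct_neg_logHess_mulVec (f : MvPolynomial (Fin n) ℝ) (a x : Fin n → ℝ) :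
    x ⬝ᵥ (-logHess f a *ᵥ x) =
      (eval a f ^ 2)⁻¹ * ((x ⬝ᵥ polyGrad f a) ^ 2 - eval a f * (x ⬝ᵥ (polyHess f a *ᵥ x))) := by
  simp only [logHess, neg_mulVec, smul_mulVec, sub_mulVec, vecMulVec_mulVec, dotProduct_neg,
    dotProduct_smul, dotProduct_sub, op_smul_eq_smul, smul_eq_mul, dotProduct_comm x (polyGrad f a)]
  ring

lemma logHess_isSymm (f : MvPolynomial (Fin n) ℝ) (a : Fin n → ℝ) : (logHess f a).IsSymm :=
  (((polyHess_isSymm f a).smul _).sub (transpose_vecMulVec _ _)).smul _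

lemma strictLogConcaveAt_iff_forall_lt_sq {a : Fin n → ℝ} (hfa : 0 < eval a f) :
    StrictLogConcaveAt f a ↔ ∀ x, x ≠ 0 →
      eval a f * (x ⬝ᵥ (polyHess f a *ᵥ x)) < (x ⬝ᵥ polyGrad f a) ^ 2 := by
  simp only [StrictLogConcaveAt, hfa, true_and, posDef_iff_dotProduct_mulVec,
    isHermitian_iff_isSymm, (logHess_isSymm f a).neg, star_trivial,
    dotProduct_neg_logHess_mulVec]
  refine forall₂_congr fun x _ => ?_
  rw [mul_pos_iff_of_pos_left (by positivity), sub_pos]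

lemma strictLogConcaveAt_iff_isNegDefOnOrthogonal (hd : 2 ≤ d) (hf : f.IsHomogeneous d)
    {a : Fin n → ℝ} (hfa : 0 < eval a f) :
    StrictLogConcaveAt f a ↔ IsNegDefOnOrthogonal (polyHess f a) a := by
  have hc : (0 : ℝ) < (d - 1 : ℕ) := by exact_mod_cast (by omega : 0 < d - 1)
  have hcd : ((d - 1 : ℕ) : ℝ) + 1 = d := by exact_mod_cast (by omega : d - 1 + 1 = d)
  rw [strictLogConcaveAt_iff_forall_lt_sq hfa]
  exact (polyHess_isSymm f a).lt_sq_iff_isNegDefOnOrthogonal hfa hc (polyHess_mulVec_self hf a)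
    (by rw [dotProduct_polyGrad_self hf, hcd])

lemma dotProduct_polyHess_mulVec_self_pos (hd : 2 ≤ d) (hf : f.IsHomogeneous d)
    {a : Fin n → ℝ} (hfa : 0 < eval a f) : 0 < a ⬝ᵥ (polyHess f a *ᵥ a) := by
  have hc : (0 : ℝ) < (d - 1 : ℕ) := by exact_mod_cast (by omega : 0 < d - 1)
  rw [polyHess_mulVec_self hf, dotProduct_smul, dotProduct_polyGrad_self hf, smul_eq_mul]
  have : (0 : ℝ) < d := by exact_mod_cast (by omega : 0 < d)
  positivity

end Hessian

theorem stmt10_general {n d : ℕ} (hd : 2 ≤ d) (f : MvPolynomial (Fin n) ℝ)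
    (hf : f.IsHomogeneous d) (K : Set (Fin n → ℝ))
    (hpos : ∀ a ∈ K, a ≠ 0 → 0 < eval a f) :
    List.TFAE
      [∀ a ∈ K, a ≠ 0 → StrictLogConcaveAt f a,
       ∀ a ∈ K, a ≠ 0 → ∀ x : Fin n → ℝ, x ≠ 0 →
         x ⬝ᵥ (polyHess f a *ᵥ a) = 0 → x ⬝ᵥ (polyHess f a *ᵥ x) < 0,
       ∀ a ∈ K, a ≠ 0 → (polyHess f a).det ≠ 0 ∧ posEigCount (polyHess f a) = 1] := by
  tfae_have 1 ↔ 2 := forall₃_congr fun a ha ha0 =>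
    strictLogConcaveAt_iff_isNegDefOnOrthogonal hd hf (hpos a ha ha0)
  tfae_have 2 ↔ 3 := forall₃_congr fun a ha ha0 =>
    (isHermitian_iff_isSymm.2 (polyHess_isSymm f a)).isNegDefOnOrthogonal_iff
      (dotProduct_polyHess_mulVec_self_pos hd hf (hpos a ha ha0))
  tfae_finish

/-- Equivalent characterizations of strict log-concavity of a form of degree
`d ≥ 2` at every nonzero point of a proper convex cone `K`, assuming `f > 0` on the nonzero
points of `K`. -/
theorem stmt10 {n d : ℕ} (hd : 2 ≤ d) (f : MvPolynomial (Fin n) ℝ)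
    (hf : f.IsHomogeneous d) (K : Set (Fin n → ℝ)) (hK : IsProperCone K)
    (hpos : ∀ a ∈ K, a ≠ 0 → 0 < eval a f) :
    List.TFAE
      [∀ a ∈ K, a ≠ 0 → StrictLogConcaveAt f a,
       ∀ a ∈ K, a ≠ 0 → ∀ x : Fin n → ℝ, x ≠ 0 →
         x ⬝ᵥ (polyHess f a *ᵥ a) = 0 → x ⬝ᵥ (polyHess f a *ᵥ x) < 0,
       ∀ a ∈ K, a ≠ 0 → (polyHess f a).det ≠ 0 ∧ posEigCount (polyHess f a) = 1] :=
  stmt10_general hd f hf K hpos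
end
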